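/- arXiv:1009.3799 — 10 statements merged into one kernel-verified Lean document; each statement's English description precedes it below -/
import Mathlib

section
/- Let A ⊆ ℤ be a finite nonempty set and Λ ⊆ ℤ a set such that A tiles ℤ with Λ at level 1, i.e. every integer x can be written in exactly one way as x = a + λ with a ∈ A and λ ∈ Λ. Let D = max A − min A be the diameter of A. Then Λ is periodic with a period of size at most 2^D: there exists an integer t with 1 ≤ t ≤ 2^D such that Λ + t = Λ. -/
/-!
A tiling of `ℤ` by a set `A` contained in `[m, m + D]` is determined by any `D` consecutive
bits of `Λ`: the point `z + m + D` must be covered, and it is covered by `m + (z + D)` exactly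
when no translate by an element of `Λ ∩ [z, z + D)` covers it, so the window at `z` decides
whether `z + D ∈ Λ`; symmetrically it decides whether `z - 1 ∈ Λ`. Two of the `2 ^ D + 1`
windows at `0, …, 2 ^ D` coincide, and the difference of their positions is a period.
-/

open Finset

def Tiles (A : Finset ℤ) (Λ : Set ℤ) : Prop :=
  ∀ x : ℤ, ∃! p : ℤ × ℤ, p.1 ∈ A ∧ p.2 ∈ Λ ∧ p.1 + p.2 = x

noncomputable def window (P : Set ℤ) (D : ℕ) (x : ℤ) : Finset ℕ :=
  open Classical in {k ∈ range D | x + k ∈ P}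

section Window

variable {P : Set ℤ} {D : ℕ} {x y : ℤ}

theorem window_eq_iff : window P D x = window P D y ↔ ∀ k < D, (x + k ∈ P ↔ y + k ∈ P) := by
  simp only [window, Finset.ext_iff, mem_filter, mem_range]
  exact forall_congr' fun k => ⟨fun h hk => by simpa [hk] using h, fun h => by grind⟩

theorem mem_iff_of_window_eq (hw : window P D x = window P D y) {k : ℤ} (hk₀ : 0 ≤ k)
    (hkD : k < D) : x + k ∈ P ↔ y + k ∈ P := by
  have := window_eq_iff.1 hw k.toNat (by omega)
  rwa [Int.toNat_of_nonneg hk₀] at this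

theorem window_add_one_eq (hw : window P D x = window P D y)
    (hnext : x + D ∈ P ↔ y + D ∈ P) : window P D (x + 1) = window P D (y + 1) := by
  refine window_eq_iff.2 fun k hk => ?_
  have e : ∀ z : ℤ, z + 1 + k = z + (k + 1 : ℕ) := fun z => by push_cast; ring
  rw [e, e]
  rcases Nat.lt_or_ge (k + 1) D with hk' | hk'
  · exact window_eq_iff.1 hw (k + 1) hk'
  · obtain rfl : D = k + 1 := by omega
    exact hnext

theorem window_sub_one_eq (hw : window P D x = window P D y)
    (hprev : x - 1 ∈ P ↔ y - 1 ∈ P) : window P D (x - 1) = window P D (y - 1) := by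
  refine window_eq_iff.2 fun k hk => ?_
  rcases k with _ | k
  · simpa using hprev
  · have e : ∀ z : ℤ, z - 1 + (k + 1 : ℕ) = z + k := fun z => by push_cast; ring
    rw [e, e]
    exact window_eq_iff.1 hw k (by omega)

theorem add_mem_iff_of_window_eq
    (hnext : ∀ x y, window P D x = window P D y → (x + D ∈ P ↔ y + D ∈ P))
    (hprev : ∀ x y, window P D x = window P D y → (x - 1 ∈ P ↔ y - 1 ∈ P))
    (hw : window P D x = window P D y) (n : ℤ) : x + n ∈ P ↔ y + n ∈ P := by
  have hshift : ∀ n : ℤ, window P D (x + n) = window P D (y + n) := by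
    intro n
    induction n using Int.induction_on with
    | zero => simpa using hw
    | succ i ih => simpa [add_assoc] using window_add_one_eq ih (hnext _ _ ih)
    | pred i ih => simpa [add_sub_assoc] using window_sub_one_eq ih (hprev _ _ ih)
  have := hnext _ _ (hshift (n - D))
  simp only [add_assoc, sub_add_cancel] at this
  exact this

theorem exists_window_eq (P : Set ℤ) (D : ℕ) :
    ∃ x y : ℤ, x < y ∧ y ≤ x + 2 ^ D ∧ window P D x = window P D y := by
  have hmaps : ∀ i ∈ range (2 ^ D + 1), window P D i ∈ (range D).powerset := fun i _ => by
    classical exact mem_powerset.2 (filter_subset _ _)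
  obtain ⟨i, hi, j, hj, hij, hw⟩ := exists_ne_map_eq_of_card_lt_of_maps_to
    (by simp : #((range D).powerset) < #(range (2 ^ D + 1))) hmaps
  simp only [mem_range] at hi hj
  have h2 : ((2 ^ D : ℕ) : ℤ) = 2 ^ D := by norm_num
  rcases Nat.lt_or_gt_of_ne hij with h | h
  · exact ⟨i, j, by omega, by omega, hw⟩
  · exact ⟨j, i, by omega, by omega, hw.symm⟩

end Window

theorem image_add_eq_of_forall_add_mem_iff {P : Set ℤ} {x y : ℤ}
    (h : ∀ n, x + n ∈ P ↔ y + n ∈ P) : (fun l => l + (y - x)) '' P = P := by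
  ext z
  rw [Set.image_add_right, Set.mem_preimage]
  convert h (z - y) using 2 <;> ring

namespace Tiles

variable {A : Finset ℤ} {Λ : Set ℤ}

theorem sub_mem_iff (h : Tiles A Λ) (x : ℤ) {a₀ : ℤ} (ha₀ : a₀ ∈ A) :
    x - a₀ ∈ Λ ↔ ∀ a ∈ A, a ≠ a₀ → x - a ∉ Λ := by
  constructor
  · intro h₀ a ha hne hx
    have := (h x).unique (y₁ := (a₀, x - a₀)) (y₂ := (a, x - a)) ⟨ha₀, h₀, by ring⟩
      ⟨ha, hx, by ring⟩
    exact hne (congrArg Prod.fst this).symm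
  · intro hno
    obtain ⟨⟨a, l⟩, ⟨ha, hl, rfl⟩, -⟩ := h x
    by_cases hne : a = a₀
    · simpa [hne] using hl
    · exact absurd (by simpa using hl) (hno a ha hne)

theorem sub_mem_iff_of_window_eq (h : Tiles A Λ) {D : ℕ} {a₀ c : ℤ} (ha₀ : a₀ ∈ A)
    (hc : ∀ a ∈ A, a ≠ a₀ → 0 ≤ c - a ∧ c - a < D) {x y : ℤ}
    (hw : window Λ D x = window Λ D y) : x + c - a₀ ∈ Λ ↔ y + c - a₀ ∈ Λ := by
  rw [h.sub_mem_iff _ ha₀, h.sub_mem_iff _ ha₀]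
  refine forall₂_congr fun a ha => imp_congr_right fun hne => not_congr ?_
  simpa [add_sub_assoc] using mem_iff_of_window_eq hw (hc a ha hne).1 (hc a ha hne).2

theorem add_mem_iff_of_window_eq (h : Tiles A Λ) {D : ℕ} {m : ℤ} (hm : m ∈ A)
    (hA : ∀ a ∈ A, m ≤ a ∧ a ≤ m + D) {x y : ℤ} (hw : window Λ D x = window Λ D y) :
    x + D ∈ Λ ↔ y + D ∈ Λ := by
  have := h.sub_mem_iff_of_window_eq (c := m + D) hm
    (fun a ha hne => by have := hA a ha; omega) hw
  convert this using 2 <;> ring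

theorem sub_one_mem_iff_of_window_eq (h : Tiles A Λ) {D : ℕ} {M : ℤ} (hM : M ∈ A)
    (hA : ∀ a ∈ A, M - D ≤ a ∧ a ≤ M) {x y : ℤ} (hw : window Λ D x = window Λ D y) :
    x - 1 ∈ Λ ↔ y - 1 ∈ Λ := by
  have := h.sub_mem_iff_of_window_eq (c := M - 1) hM
    (fun a ha hne => by have := hA a ha; omega) hw
  convert this using 2 <;> ring

end Tiles

/-- Newman's theorem: every tiling of `ℤ` at level 1 by a finite set `A` of
diameter `D` is periodic with a period of size at most `2 ^ D`. -/
theorem stmt_0 (A : Finset ℤ) (hA : A.Nonempty) (Λ : Set ℤ)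
    (htile : ∀ x : ℤ, ∃! p : ℤ × ℤ, p.1 ∈ A ∧ p.2 ∈ Λ ∧ p.1 + p.2 = x) :
    ∃ t : ℤ, 1 ≤ t ∧ t ≤ 2 ^ (A.max' hA - A.min' hA).toNat ∧
      (fun l => l + t) '' Λ = Λ := by
  have h : Tiles A Λ := htile
  set D := (A.max' hA - A.min' hA).toNat
  have hD : (D : ℤ) = A.max' hA - A.min' hA := Int.toNat_of_nonneg (by
    have := A.min'_le_max' hA; omega)
  have hbounds : ∀ a ∈ A, A.min' hA ≤ a ∧ a ≤ A.max' hA := fun a ha =>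
    ⟨A.min'_le a ha, A.le_max' a ha⟩
  have hnext : ∀ x y, window Λ D x = window Λ D y → (x + D ∈ Λ ↔ y + D ∈ Λ) := fun _ _ =>
    h.add_mem_iff_of_window_eq (A.min'_mem hA) fun a ha => by have := hbounds a ha; omega
  have hprev : ∀ x y, window Λ D x = window Λ D y → (x - 1 ∈ Λ ↔ y - 1 ∈ Λ) := fun _ _ =>
    h.sub_one_mem_iff_of_window_eq (A.max'_mem hA) fun a ha => by have := hbounds a ha; omega
  obtain ⟨x, y, hxy, hyx, hw⟩ := exists_window_eq Λ D
  exact ⟨y - x, by omega, by omega,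
    image_add_eq_of_forall_add_mem_iff (add_mem_iff_of_window_eq hnext hprev hw)⟩
end

section
/- Let n ≥ 1, let A, B ⊆ ℤ/nℤ with A ⊕ B = ℤ/nℤ a tiling, let H be a subgroup of ℤ/nℤ, and suppose A is H-invariant: A + h = A for every h ∈ H. Let π : ℤ/nℤ → (ℤ/nℤ)/H be the quotient map. Then the map π(A) × π(B) → (ℤ/nℤ)/H given by (u, v) ↦ u + v is a bijection; in particular π is injective on B and π(A) ⊕ π(B) is a tiling of the quotient group (ℤ/nℤ)/H. -/
/-- If `A ⊕ B = ℤ/nℤ` is a tiling and `A` is invariant under a subgroup `H`,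
then the tiling descends to the quotient: `(u, v) ↦ u + v` is a bijection from
`π(A) × π(B)` onto `(ℤ/nℤ)/H`; in particular `π` is injective on `B`. -/
theorem stmt_2 (n : ℕ) (hn : 1 ≤ n) (A B : Set (ZMod n)) (H : AddSubgroup (ZMod n))
    (htile : ∀ x : ZMod n, ∃! p : ZMod n × ZMod n, p.1 ∈ A ∧ p.2 ∈ B ∧ p.1 + p.2 = x)
    (hinv : ∀ h ∈ H, (fun a => a + h) '' A = A) :
    (∀ y : ZMod n ⧸ H, ∃! p : (ZMod n ⧸ H) × (ZMod n ⧸ H),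
        p.1 ∈ (QuotientAddGroup.mk (s := H)) '' A ∧
        p.2 ∈ (QuotientAddGroup.mk (s := H)) '' B ∧ p.1 + p.2 = y) ∧
      Set.InjOn (QuotientAddGroup.mk (s := H)) B := by
  -- A is stable under adding elements of H
  have hmem : ∀ h ∈ H, ∀ a, a ∈ A → a + h ∈ A := by
    intro h hh a ha
    rw [← hinv h hh]
    exact ⟨a, ha, rfl⟩
  constructor
  · intro y
    obtain ⟨x, rfl⟩ := QuotientAddGroup.mk_surjective y
    obtain ⟨⟨a, b⟩, ⟨ha, hb, hab⟩, huniq⟩ := htile x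
    refine ⟨(QuotientAddGroup.mk a, QuotientAddGroup.mk b),
      ⟨⟨a, ha, rfl⟩, ⟨b, hb, rfl⟩, by
        simp only [← QuotientAddGroup.mk_add, hab]⟩, ?_⟩
    rintro ⟨u, v⟩ ⟨⟨a', ha', rfl⟩, ⟨b', hb', rfl⟩, hsum⟩
    simp only [← QuotientAddGroup.mk_add] at hsum
    rw [QuotientAddGroup.eq] at hsum
    set h := -(a' + b') + x with hh
    have hhH : h ∈ H := hsum
    have ha'' : a' + h ∈ A := hmem h hhH a' ha'
    have hsum2 : (a' + h) + b' = x := by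
      rw [hh]; ring
    have := huniq (a' + h, b') ⟨ha'', hb', hsum2⟩
    have h1 : a' + h = a := congrArg Prod.fst this
    have h2 : b' = b := congrArg Prod.snd this
    simp only [Prod.mk.injEq]
    constructor
    · rw [← h1]
      exact (QuotientAddGroup.eq).mpr (by simpa using hhH)
    · rw [h2]
  · intro b hb b' hb' hbb'
    -- A is nonempty
    obtain ⟨⟨a, c⟩, ⟨ha, hc, hac⟩, _⟩ := htile 0
    rw [QuotientAddGroup.eq] at hbb'
    set h := -b + b' with hh
    have hhH : h ∈ H := hbb'
    obtain ⟨⟨a', c'⟩, _, huniq⟩ := htile (a + b)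
    have e1 := huniq (a, b) ⟨ha, hb, rfl⟩
    have e2 := huniq (a + -h, b') ⟨hmem (-h) (H.neg_mem hhH) a ha, hb', by rw [hh]; ring⟩
    exact congrArg Prod.snd (e1.trans e2.symm)
end

section
/- Let M ≥ 1 and let A, B ⊆ {0, 1, …, M−1} be such that A ⊕ B = ℤ/Mℤ is a tiling, with mask polynomials A(x) = ∑_{a∈A} x^a and B(x) = ∑_{b∈B} x^b. Let t ≥ 1 be an integer such that for every integer s > 1, if the cyclotomic polynomial Φ_s(x) divides A(x) then s divides t. Then x^M − 1 divides (x^t − 1)·B(x) in ℤ[x]; consequently the image of B in ℤ/Mℤ is invariant under adding t, i.e. B + t = B in ℤ/Mℤ. -/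
/-!
Since every residue mod `M` is hit exactly once by `a + b`, the tiling says
`A(X) B(X) ≡ 1 + X + ⋯ + X^(M-1) (mod X^M - 1)`. So for each divisor `s > 1` of `M` the
irreducible, hence prime, `Φ_s` divides `A(X) B(X)`: it divides `B(X)`, or it divides `A(X)`,
and then `s ∣ t` gives `Φ_s ∣ X^t - 1`. As `Φ_1 = X - 1` divides `X^t - 1` too, each of the
pairwise coprime (over `ℚ`) factors `Φ_s`, `s ∣ M`, of `X^M - 1` divides `(X^t - 1) B(X)`, and
then so does `X^M - 1`. Reading this divisibility in the group ring `ℤ[ℤ/Mℤ]` shows that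
`B + t` and `B` are the same multiset of residues.
-/

open Polynomial Finset

section Congruence

variable {R : Type*} [CommRing R]

theorem X_pow_sub_one_dvd_X_pow_sub_X_pow_mod (M n : ℕ) :
    (X ^ M - 1 : R[X]) ∣ X ^ n - X ^ (n % M) := by
  have h : (X : R[X]) ^ n - X ^ (n % M) = X ^ (n % M) * ((X ^ M) ^ (n / M) - 1) := by
    rw [mul_sub, mul_one, ← pow_mul, ← pow_add, Nat.mod_add_div]
  rw [h]
  exact (sub_one_dvd_pow_sub_one _ _).mul_left _

theorem sum_X_pow_add_mod_eq_geom_sum_of_tiling {M : ℕ} [NeZero M] {A B : Finset ℕ}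
    (htile : ∀ y : ZMod M, ∃! p : ℕ × ℕ, p.1 ∈ A ∧ p.2 ∈ B ∧ (p.1 : ZMod M) + p.2 = y) :
    ∑ p ∈ A ×ˢ B, (X : R[X]) ^ ((p.1 + p.2) % M) = ∑ j ∈ range M, X ^ j := by
  refine sum_nbij (fun p ↦ (p.1 + p.2) % M)
    (fun p _ ↦ mem_range.2 (Nat.mod_lt _ (NeZero.pos M))) ?_ ?_ (fun _ _ ↦ rfl)
  · intro p hp q hq hpq
    simp only [coe_product, Set.mem_prod, mem_coe] at hp hq
    have hpq : (p.1 : ZMod M) + p.2 = q.1 + q.2 := by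
      exact_mod_cast (ZMod.natCast_eq_natCast_iff' _ _ _).2 hpq
    exact (htile _).unique ⟨hp.1, hp.2, hpq⟩ ⟨hq.1, hq.2, rfl⟩
  · intro j hj
    obtain ⟨p, ⟨hp1, hp2, hpj⟩, -⟩ := htile j
    refine ⟨p, by simpa using ⟨hp1, hp2⟩, ?_⟩
    rw [← Nat.mod_eq_of_lt (mem_range.1 hj), ← ZMod.natCast_eq_natCast_iff']
    push_cast
    exact hpj

theorem X_pow_sub_one_dvd_mul_sub_geom_sum_of_tiling {M : ℕ} [NeZero M] {A B : Finset ℕ}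
    (htile : ∀ y : ZMod M, ∃! p : ℕ × ℕ, p.1 ∈ A ∧ p.2 ∈ B ∧ (p.1 : ZMod M) + p.2 = y) :
    (X ^ M - 1 : R[X]) ∣ (∑ a ∈ A, X ^ a) * (∑ b ∈ B, X ^ b) - ∑ j ∈ range M, X ^ j := by
  rw [← sum_X_pow_add_mod_eq_geom_sum_of_tiling htile, sum_mul_sum, ← sum_product',
    ← sum_sub_distrib]
  exact dvd_sum fun p _ ↦
    (pow_add (X : R[X]) p.1 p.2).symm ▸ X_pow_sub_one_dvd_X_pow_sub_X_pow_mod M _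

end Congruence

theorem cyclotomic_dvd_X_pow_sub_one_of_dvd (R : Type*) [CommRing R] {s t : ℕ} (h : s ∣ t) :
    cyclotomic s R ∣ X ^ t - 1 :=
  (cyclotomic.dvd_X_pow_sub_one s R).trans (dvd_pow_sub_one_of_dvd h)

theorem X_pow_sub_one_dvd_of_forall_cyclotomic_dvd {M : ℕ} (hM : 0 < M) {F : ℤ[X]}
    (h : ∀ s ∈ M.divisors, cyclotomic s ℤ ∣ F) : (X ^ M - 1 : ℤ[X]) ∣ F := by
  have hmonic : (X ^ M - 1 : ℤ[X]).Monic := by simpa using monic_X_pow_sub_C (1 : ℤ) hM.ne'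
  rw [← map_dvd_map (Int.castRingHom ℚ) Int.cast_injective hmonic, Polynomial.map_sub,
    Polynomial.map_pow, map_X, Polynomial.map_one, ← prod_cyclotomic_eq_X_pow_sub_one hM]
  refine prod_dvd_of_coprime (fun a _ b _ hab ↦ cyclotomic.isCoprime_rat hab) fun s hs ↦ ?_
  simpa using map_dvd (mapRingHom (Int.castRingHom ℚ)) (h s hs)

theorem X_pow_sub_one_dvd_X_pow_sub_one_mul {M t : ℕ} (hM : 0 < M) {P Q : ℤ[X]}
    (hPQ : (X ^ M - 1 : ℤ[X]) ∣ P * Q - ∑ j ∈ range M, X ^ j)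
    (hP : ∀ s, 1 < s → cyclotomic s ℤ ∣ P → s ∣ t) :
    (X ^ M - 1 : ℤ[X]) ∣ (X ^ t - 1) * Q := by
  refine X_pow_sub_one_dvd_of_forall_cyclotomic_dvd hM fun s hs ↦ ?_
  obtain rfl | hs1 := eq_or_ne s 1
  · exact (cyclotomic_dvd_X_pow_sub_one_of_dvd ℤ (one_dvd t)).mul_right _
  have hs0 : 0 < s := Nat.pos_of_mem_divisors hs
  have hdvd_PQ : cyclotomic s ℤ ∣ P * Q := by
    have hgeom : cyclotomic s ℤ ∣ ∑ j ∈ range M, X ^ j := by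
      rw [← prod_cyclotomic_eq_geom_sum hM]
      exact dvd_prod_of_mem _ (mem_erase.2 ⟨hs1, hs⟩)
    have h := dvd_add
      ((cyclotomic_dvd_X_pow_sub_one_of_dvd ℤ (Nat.dvd_of_mem_divisors hs)).trans hPQ) hgeom
    rwa [sub_add_cancel] at h
  rcases (cyclotomic.irreducible hs0).prime.dvd_or_dvd hdvd_PQ with hdvd_P | hdvd_Q
  · exact (cyclotomic_dvd_X_pow_sub_one_of_dvd ℤ (hP s (by omega) hdvd_P)).mul_right _
  · exact hdvd_Q.mul_left _

section GroupRing

variable (M : ℕ)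

/-- Reduction modulo `X^M - 1`, realised in the group ring `ℤ[ℤ/Mℤ]`. -/
noncomputable def toAddMonoidAlgebraZMod : ℤ[X] →ₐ[ℤ] AddMonoidAlgebra ℤ (ZMod M) :=
  aeval (AddMonoidAlgebra.single 1 1)

theorem toAddMonoidAlgebraZMod_X_pow (n : ℕ) :
    toAddMonoidAlgebraZMod M (X ^ n) = AddMonoidAlgebra.single (n : ZMod M) 1 := by
  rw [toAddMonoidAlgebraZMod, map_pow, aeval_X, AddMonoidAlgebra.single_pow, one_pow, nsmul_one]

theorem toAddMonoidAlgebraZMod_eq_zero_of_dvd {F : ℤ[X]} (h : (X ^ M - 1 : ℤ[X]) ∣ F) :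
    toAddMonoidAlgebraZMod M F = 0 := by
  obtain ⟨G, rfl⟩ := h
  rw [map_mul, map_sub, toAddMonoidAlgebraZMod_X_pow, ZMod.natCast_self, map_one,
    ← AddMonoidAlgebra.one_def, sub_self, zero_mul]

theorem AddMonoidAlgebra.coeff_sum_single_one {ι α : Type*} [DecidableEq α] (s : Finset ι)
    (g : ι → α) (y : α) :
    (∑ i ∈ s, AddMonoidAlgebra.single (g i) (1 : ℤ)).coeff y = (s.val.map g).count y := by
  simp [AddMonoidAlgebra.coeff_sum, Finsupp.single_apply, Multiset.count_map, eq_comm, card_def]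

theorem map_natCast_eq_of_X_pow_sub_one_dvd {ι : Type*} (s : Finset ι) (f g : ι → ℕ)
    (h : (X ^ M - 1 : ℤ[X]) ∣ ∑ i ∈ s, X ^ f i - ∑ i ∈ s, X ^ g i) :
    s.val.map (fun i ↦ (f i : ZMod M)) = s.val.map (fun i ↦ (g i : ZMod M)) := by
  ext y
  have h0 := congrArg (fun F ↦ F.coeff y) (toAddMonoidAlgebraZMod_eq_zero_of_dvd M h)
  simp only [map_sub, map_sum, toAddMonoidAlgebraZMod_X_pow, AddMonoidAlgebra.coeff_sub,
    Finsupp.sub_apply, AddMonoidAlgebra.coeff_zero, Finsupp.zero_apply,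
    AddMonoidAlgebra.coeff_sum_single_one] at h0
  omega

end GroupRing

theorem stmt_6_general (M : ℕ) (hM : 1 ≤ M) (A B : Finset ℕ)
    (htile : ∀ y : ZMod M, ∃! p : ℕ × ℕ,
      p.1 ∈ A ∧ p.2 ∈ B ∧ ((p.1 : ZMod M) + (p.2 : ZMod M) = y))
    (t : ℕ)
    (hcyc : ∀ s : ℕ, 1 < s → cyclotomic s ℤ ∣ (∑ a ∈ A, X ^ a) → s ∣ t) :
    (X ^ M - 1 : ℤ[X]) ∣ (X ^ t - 1) * (∑ b ∈ B, X ^ b) ∧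
      Finset.image (fun b : ℕ => (b : ZMod M) + (t : ZMod M)) B =
        Finset.image (fun b : ℕ => (b : ZMod M)) B := by
  have : NeZero M := ⟨by omega⟩
  have hdvd : (X ^ M - 1 : ℤ[X]) ∣ (X ^ t - 1) * ∑ b ∈ B, X ^ b :=
    X_pow_sub_one_dvd_X_pow_sub_one_mul hM
      (X_pow_sub_one_dvd_mul_sub_geom_sum_of_tiling htile) hcyc
  refine ⟨hdvd, ?_⟩
  have hshift : (X ^ t - 1) * ∑ b ∈ B, X ^ b =
      ∑ b ∈ B, X ^ (b + t) - ∑ b ∈ B, (X : ℤ[X]) ^ b := by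
    rw [sub_mul, one_mul, mul_sum]
    exact congrArg (· - _) (sum_congr rfl fun b _ ↦ by rw [pow_add, mul_comm])
  rw [hshift] at hdvd
  have hres := map_natCast_eq_of_X_pow_sub_one_dvd M B (· + t) id hdvd
  push_cast at hres
  exact congrArg Multiset.toFinset hres

/-- If `A ⊕ B = ℤ/Mℤ` is a tiling and `t ≥ 1` is such that `s ∣ t` whenever
`Φ_s(x) ∣ A(x)` for `s > 1`, then `x^M - 1` divides `(x^t - 1)·B(x)`;
consequently the image of `B` in `ℤ/Mℤ` is invariant under adding `t`. -/
theorem stmt_6 (M : ℕ) (hM : 1 ≤ M) (A B : Finset ℕ)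
    (hA : ∀ a ∈ A, a < M) (hB : ∀ b ∈ B, b < M)
    (htile : ∀ y : ZMod M, ∃! p : ℕ × ℕ,
      p.1 ∈ A ∧ p.2 ∈ B ∧ ((p.1 : ZMod M) + (p.2 : ZMod M) = y))
    (t : ℕ) (ht : 1 ≤ t)
    (hcyc : ∀ s : ℕ, 1 < s → cyclotomic s ℤ ∣ (∑ a ∈ A, X ^ a) → s ∣ t) :
    (X ^ M - 1 : ℤ[X]) ∣ (X ^ t - 1) * (∑ b ∈ B, X ^ b) ∧
      Finset.image (fun b : ℕ => (b : ZMod M) + (t : ZMod M)) B =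
        Finset.image (fun b : ℕ => (b : ZMod M)) B :=
  stmt_6_general M hM A B htile t hcyc
end

section
/- There exists a function f : ℝ → ℝ which is strictly positive everywhere, is real-analytic on all of ℝ, and tiles ℝ with ℤ at a constant level: there is a constant ℓ > 0 such that for every x ∈ ℝ the series ∑_{n ∈ ℤ} f(x − n) converges and equals ℓ. -/
/-!
Dividing a positive function `g` by its `ℤ`-periodization `P x = ∑ₙ g (x - n)` gives a function
whose `ℤ`-translates sum to `1`, because `P` is itself `1`-periodic. For the Gaussian
`g x = exp (-π x²)` the periodization is `exp (-π x²) θ(-i x, i)`, with `θ` the Jacobi theta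
function, which is entire in `x`; so `g / P` is positive, real-analytic, and tiles at level `1`.
-/

open Complex Real

lemma periodization_sub_int {E : Type*} [AddCommMonoid E] [TopologicalSpace E] [T2Space E]
    {g P : ℝ → E} (hg : ∀ x, HasSum (fun n : ℤ => g (x - n)) (P x))
    (x : ℝ) (k : ℤ) : P (x - k) = P x := by
  refine (hg (x - k)).unique ((Equiv.addLeft k).hasSum_iff.mpr (hg x) |>.congr_fun fun n => ?_)
  simp only [Function.comp_apply, Equiv.coe_addLeft, Int.cast_add, sub_sub]

theorem hasSum_div_periodization {K : Type*} [DivisionRing K] [TopologicalSpace K]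
    [IsTopologicalRing K] [T2Space K] {g P : ℝ → K}
    (hg : ∀ x, HasSum (fun n : ℤ => g (x - n)) (P x)) (hP : ∀ x, P x ≠ 0) (x : ℝ) :
    HasSum (fun n : ℤ => g (x - n) / P (x - n)) 1 := by
  simp only [periodization_sub_int hg]
  simpa [div_self (hP x)] using (hg x).div_const (P x)

lemma hasSum_cexp_neg_pi_mul_sub_int_sq (z : ℂ) :
    HasSum (fun n : ℤ => cexp (-π * (z - n) ^ 2))
      (cexp (-π * z ^ 2) * jacobiTheta₂ (-I * z) I) := by
  refine ((hasSum_jacobiTheta₂_term (-I * z) (by simp : 0 < I.im)).mul_left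
    (cexp (-π * z ^ 2))).congr_fun fun n => ?_
  rw [jacobiTheta₂_term, ← Complex.exp_add]
  congr 1
  linear_combination (2 * π * n * z - π * n ^ 2) * I_sq

lemma differentiable_cexp_mul_jacobiTheta₂ :
    Differentiable ℂ (fun z : ℂ => cexp (-π * z ^ 2) * jacobiTheta₂ (-I * z) I) := fun z =>
  ((differentiableAt_id.pow 2).const_mul _).cexp.mul <|
    (differentiableAt_jacobiTheta₂_fst (-I * z) (by simp : 0 < I.im)).comp z
      (differentiableAt_id.const_mul (-I))

noncomputable def gaussianPeriodization (x : ℝ) : ℝ :=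
  (cexp (-π * x ^ 2) * jacobiTheta₂ (-I * x) I).re

lemma hasSum_gaussianPeriodization (x : ℝ) :
    HasSum (fun n : ℤ => rexp (-π * (x - n) ^ 2)) (gaussianPeriodization x) :=
  (Complex.hasSum_re (hasSum_cexp_neg_pi_mul_sub_int_sq x)).congr_fun fun n => by
    rw [← exp_ofReal_re]
    push_cast
    rfl

lemma gaussianPeriodization_pos (x : ℝ) : 0 < gaussianPeriodization x :=
  hasSum_lt (fun _ => (exp_pos _).le) (exp_pos _) hasSum_zero
    (hasSum_gaussianPeriodization x) (i := 0)

lemma analyticAt_gaussianPeriodization (x : ℝ) : AnalyticAt ℝ gaussianPeriodization x :=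
  reCLM.analyticAt _ |>.comp <|
    (differentiable_cexp_mul_jacobiTheta₂.analyticAt (x : ℂ)).restrictScalars.comp
      (ofRealCLM.analyticAt x)

/-- Steinhaus's problem from the Scottish Book: there is a strictly positive,
real-analytic function on `ℝ` which tiles `ℝ` with `ℤ` at a constant level. -/
theorem stmt_8 :
    ∃ f : ℝ → ℝ, (∀ x, 0 < f x) ∧ AnalyticOn ℝ f Set.univ ∧
      ∃ ℓ : ℝ, 0 < ℓ ∧ ∀ x : ℝ, HasSum (fun n : ℤ => f (x - n)) ℓ := by
  refine ⟨fun x => rexp (-π * x ^ 2) / gaussianPeriodization x,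
    fun x => div_pos (exp_pos _) (gaussianPeriodization_pos x), fun x _ => ?_, 1, one_pos, ?_⟩
  · have hgauss : AnalyticAt ℝ (fun x : ℝ => rexp (-π * x ^ 2)) x :=
      analyticAt_rexp.comp (by fun_prop)
    exact (hgauss.div (analyticAt_gaussianPeriodization x)
      (gaussianPeriodization_pos x).ne').analyticWithinAt
  · exact hasSum_div_periodization (g := fun x => rexp (-π * x ^ 2))
      hasSum_gaussianPeriodization fun x => (gaussianPeriodization_pos x).ne'
end

section
/- The Gaussian does not tile ℝ with any set of translates: there is no countable set Λ ⊆ ℝ and no constant ℓ > 0 such that ∑_{λ ∈ Λ} e^{−(x−λ)²} = ℓ for every x ∈ ℝ (with the sum understood as an absolutely convergent sum over Λ). -/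
/-!
Convolving the tiling identity `∑_λ e^{-(x-λ)²} = ℓ` with a Gaussian `e^{-t(x-a)²}` and
completing the square gives `∑_λ e^{-s(a-λ)²} = ℓ / √s` for every `a` and every `0 < s < 1`.
The left side is the restriction of a function holomorphic in `s` on a right half-plane, so by
the identity theorem `s (∑_λ e^{-s(a-λ)²})² = ℓ²` for all `s > 0`. Taking `a ∈ Λ`, the sum is at
least `1`, which contradicts `ℓ / √s → 0` as `s → ∞`.
-/

open Real MeasureTheory Filter Set Topology

theorem integral_exp_neg_mul_sq_sub (b m : ℝ) : ∫ x, exp (-(b * (x - m) ^ 2)) = √(π / b) := by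
  simpa only [neg_mul] using
    (integral_sub_right_eq_self (fun x => exp (-b * x ^ 2)) m).trans (integral_gaussian b)

theorem exp_neg_mul_sq_sub_mul_exp_neg_mul_sq_sub {p q : ℝ} (hpq : p + q ≠ 0) (a b x : ℝ) :
    exp (-(p * (x - a) ^ 2)) * exp (-(q * (x - b) ^ 2)) =
      exp (-((p + q) * (x - (p * a + q * b) / (p + q)) ^ 2)) *
        exp (-(p * q / (p + q) * (a - b) ^ 2)) := by
  rw [← exp_add, ← exp_add]
  congr 1
  field_simp
  ring

theorem integral_exp_neg_mul_sq_sub_mul_exp_neg_mul_sq_sub {p q : ℝ} (hpq : p + q ≠ 0)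
    (a b : ℝ) :
    ∫ x, exp (-(p * (x - a) ^ 2)) * exp (-(q * (x - b) ^ 2)) =
      √(π / (p + q)) * exp (-(p * q / (p + q) * (a - b) ^ 2)) := by
  simp_rw [exp_neg_mul_sq_sub_mul_exp_neg_mul_sq_sub hpq a b, integral_mul_const,
    integral_exp_neg_mul_sq_sub]

theorem hasSum_integral_of_nonneg {α ι : Type*} [MeasurableSpace α] {μ : Measure α}
    [Countable ι] {F : ι → α → ℝ} {S : α → ℝ} (hF : ∀ i, AEStronglyMeasurable (F i) μ)
    (hF_nonneg : ∀ i a, 0 ≤ F i a) (hS : Integrable S μ) (h : ∀ a, HasSum (F · a) (S a)) :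
    HasSum (fun i => ∫ a, F i a ∂μ) (∫ a, S a ∂μ) :=
  hasSum_integral_of_dominated_convergence F hF
    (fun i => .of_forall fun a => (Real.norm_of_nonneg (hF_nonneg i a)).le)
    (.of_forall fun a => (h a).summable)
    (hS.congr (.of_forall fun a => (h a).tsum_eq.symm)) (.of_forall h)

theorem hasSum_exp_neg_mul_sq_of_tiling {ι : Type*} [Countable ι] {c : ι → ℝ} {ℓ : ℝ}
    (h : ∀ x, HasSum (fun i => exp (-(x - c i) ^ 2)) ℓ) (a : ℝ) {s : ℝ} (hs0 : 0 < s)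
    (hs1 : s < 1) : HasSum (fun i => exp (-(s * (a - c i) ^ 2))) (ℓ / √s) := by
  -- convolve with `e^{-t(x-a)²}`, where `t` is chosen so that `t · 1 / (t + 1) = s`
  set t := s / (1 - s)
  have ht : 0 < t := div_pos hs0 (by linarith)
  have hts : t * 1 / (t + 1) = s := by
    simp only [t]
    field_simp [(by linarith : 1 - s ≠ 0)]
    ring
  have hconv := hasSum_integral_of_nonneg (μ := volume)
    (F := fun i x => exp (-(t * (x - a) ^ 2)) * exp (-(1 * (x - c i) ^ 2)))
    (S := fun x => exp (-(t * (x - a) ^ 2)) * ℓ)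
    (fun i => by fun_prop) (fun i x => by positivity)
    (by simpa only [neg_mul] using ((integrable_exp_neg_mul_sq ht).comp_sub_right a).mul_const ℓ)
    (fun x => by simpa only [one_mul] using (h x).mul_left (exp (-(t * (x - a) ^ 2))))
  simp only [integral_exp_neg_mul_sq_sub_mul_exp_neg_mul_sq_sub (by positivity : t + 1 ≠ 0),
    integral_mul_const, integral_exp_neg_mul_sq_sub, hts] at hconv
  have hπt : π / t = π / (t + 1) / s := by
    rw [← hts]
    field_simp
  rw [hπt, sqrt_div' _ hs0.le, div_mul_eq_mul_div, mul_div_assoc] at hconv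
  exact (hasSum_mul_left_iff (by positivity)).1 hconv

theorem eqOn_re_gt_of_eqOn_Ioo {f g : ℂ → ℂ} {a b : ℝ} (hab : a < b)
    (hf : DifferentiableOn ℂ f {w | a < w.re}) (hg : DifferentiableOn ℂ g {w | a < w.re})
    (h : ∀ s ∈ Ioo a b, f s = g s) : EqOn f g {w | a < w.re} := by
  have hU : IsOpen {w : ℂ | a < w.re} := isOpen_lt continuous_const Complex.continuous_re
  obtain ⟨x₀, hx₀⟩ : (Ioo a b).Nonempty := nonempty_Ioo.2 hab
  have hfreq : ∃ᶠ z in 𝓝[≠] (x₀ : ℂ), f z = g z := by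
    have hofReal : Tendsto ((↑) : ℝ → ℂ) (𝓝[≠] x₀) (𝓝[≠] (x₀ : ℂ)) :=
      Complex.continuous_ofReal.continuousWithinAt.tendsto_nhdsWithin fun _ hx => by simpa using hx
    refine hofReal.frequently (Eventually.frequently ?_)
    filter_upwards [nhdsWithin_le_nhds (Ioo_mem_nhds hx₀.1 hx₀.2)] using h
  exact (hf.analyticOnNhd hU).eqOn_of_preconnected_of_frequently_eq (hg.analyticOnNhd hU)
    (convex_halfSpace_re_gt a).isPreconnected (by simpa using hx₀.1) hfreq

section GaussianSeries

variable {ι : Type*} (c : ι → ℝ)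

theorem differentiableOn_tsum_cexp_neg_mul_sq {a : ℝ}
    (ha : Summable fun i => exp (-(a * c i ^ 2))) :
    DifferentiableOn ℂ (fun w : ℂ => ∑' i, Complex.exp (-(w * c i ^ 2))) {w | a < w.re} := by
  refine Complex.differentiableOn_tsum_of_summable_norm ha (fun i => by fun_prop)
    (isOpen_lt continuous_const Complex.continuous_re) fun i w hw => ?_
  rw [Complex.norm_exp, ← Complex.ofReal_pow, Complex.neg_re, Complex.re_mul_ofReal]
  gcongr
  exact hw.le

theorem tsum_cexp_neg_mul_sq_ofReal (s : ℝ) :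
    ∑' i, Complex.exp (-(s * c i ^ 2)) = ↑(∑' i, exp (-(s * c i ^ 2))) := by
  rw [Complex.ofReal_tsum]
  push_cast
  rfl

theorem hasSum_exp_neg_mul_sq_of_forall_Ioo {b ℓ : ℝ} (hb : 0 < b)
    (h : ∀ s ∈ Ioo 0 b, HasSum (fun i => exp (-(s * c i ^ 2))) (ℓ / √s)) {s : ℝ} (hs : 0 < s) :
    HasSum (fun i => exp (-(s * c i ^ 2))) (ℓ / √s) := by
  obtain ⟨a, ha, has_ab⟩ := exists_between (lt_min hs hb)
  obtain ⟨has, hab⟩ := lt_min_iff.1 has_ab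
  have hsumm : ∀ {r}, a ≤ r → Summable fun i => exp (-(r * c i ^ 2)) := fun har =>
    (h a ⟨ha, hab⟩).summable.of_nonneg_of_le (fun i => (exp_pos _).le) fun i => by gcongr
  have hℓ : 0 ≤ ℓ := by
    have := (h a ⟨ha, hab⟩).nonneg fun i => (exp_pos _).le
    simpa using (le_div_iff₀ (sqrt_pos.2 ha)).1 this
  have hG := differentiableOn_tsum_cexp_neg_mul_sq c (hsumm le_rfl)
  -- `√s` has no holomorphic extension to the half-plane, so continue the squared identity
  have hcontinued := eqOn_re_gt_of_eqOn_Ioo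
    (f := fun w => w * (∑' i, Complex.exp (-(w * c i ^ 2))) ^ 2) (g := fun _ => (ℓ : ℂ) ^ 2)
    hab (differentiableOn_id.mul (hG.pow 2)) (differentiableOn_const _) fun r hr => by
      have hr0 : 0 < r := ha.trans hr.1
      simp only [tsum_cexp_neg_mul_sq_ofReal, (h r ⟨hr0, hr.2⟩).tsum_eq]
      norm_cast
      rw [div_pow, sq_sqrt hr0.le]
      field_simp
  have hsq := hcontinued (show a < (s : ℂ).re by simpa using has)
  simp only [tsum_cexp_neg_mul_sq_ofReal] at hsq
  norm_cast at hsq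
  convert (hsumm has.le).hasSum
  refine ((sq_eq_sq₀ (by positivity) (tsum_nonneg fun i => (exp_pos _).le)).1 ?_)
  rw [div_pow, sq_sqrt hs.le, ← hsq]
  field_simp

end GaussianSeries

/-- The Gaussian `e^{-x²}` does not tile `ℝ` with any countable set of
translates at any positive constant level. -/
theorem stmt_9 :
    ¬ ∃ (Λ : Set ℝ), Λ.Countable ∧ ∃ ℓ : ℝ, 0 < ℓ ∧
      ∀ x : ℝ, HasSum (fun l : Λ => Real.exp (-(x - (l : ℝ)) ^ 2)) ℓ := by
  rintro ⟨Λ, hΛ, ℓ, hℓ, H⟩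
  have := hΛ.to_subtype
  obtain ⟨l₀⟩ : Nonempty Λ := by
    by_contra hempty
    rw [not_nonempty_iff] at hempty
    exact hℓ.ne' ((H 0).unique hasSum_empty)
  have hlarge := hasSum_exp_neg_mul_sq_of_forall_Ioo (fun l : Λ => (l₀ : ℝ) - l) one_pos
    (fun s hs => hasSum_exp_neg_mul_sq_of_tiling H l₀ hs.1 hs.2) (s := (ℓ + 1) ^ 2)
    (by positivity)
  rw [sqrt_sq (by positivity)] at hlarge
  -- the term `l = l₀` alone contributes `1 > ℓ / (ℓ + 1)`
  have hterm := le_hasSum hlarge l₀ fun _ _ => (exp_pos _).le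
  rw [sub_self, le_div_iff₀ (by positivity)] at hterm
  norm_num at hterm
end

section
/- Let a₁, a₂, b₁, b₂ > 0 be real numbers and let A = (0,a₁)×(0,a₂), B = (0,b₁)×(0,b₂) and Q = (0,1)². Then there exist finite sets T, S ⊆ ℝ² such that χ_Q(x) = ∑_{t∈T} χ_{A}(x−t) + ∑_{s∈S} χ_{B}(x−s) for almost every x ∈ ℝ² (i.e. Q can be tiled by translates of the two bricks A and B) if and only if at least one of the following holds: (i) 1/a₁ ∈ ℤ and 1/a₂ ∈ ℤ; (ii) 1/b₁ ∈ ℤ and 1/b₂ ∈ ℤ; (iii) 1/a₁ ∈ ℤ and 1/b₁ ∈ ℤ and there exist nonnegative integers k, l with k·a₂ + l·b₂ = 1; (iv) 1/a₂ ∈ ℤ and 1/b₂ ∈ ℤ and there exist nonnegative integers k, l with k·a₁ + l·b₁ = 1. Equivalently: a tiling exists if and only if Q can be cut by a horizontal or vertical line into two rectangles (one possibly empty), each of which is tiled by translates of bricks of a single type. -/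
/-!
Sufficiency: in cases (iii) and (iv) cut the square along the line `y = k a₂`, resp. `x = k a₁`,
and tile each of the two rectangles by a grid of bricks of one type; in cases (i) and (ii) the
square itself is such a grid.

Necessity: integrating the tiling identity against the character
`e(x/a₁ + y/b₂) = exp (2πi (x/a₁ + y/b₂))` kills every brick, since the integral of a
character over a brick with a side `a₁` in the first or `b₂` in the second coordinate vanishes.
Hence so does its integral over `(0,1)²`, which is the product of `∫₀¹ e(x/a₁)` and `∫₀¹ e(y/b₂)`,
so `1/a₁ ∈ ℤ` or `1/b₂ ∈ ℤ`; exchanging the bricks, `1/b₁ ∈ ℤ` or `1/a₂ ∈ ℤ`. Moreover almost every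
vertical line through the square meets the tiling in a tiling of `(0,1)` by intervals of lengths
`a₂` and `b₂`, and integrating along it gives `k a₂ + l b₂ = 1`; similarly `k a₁ + l b₁ = 1`.
The four combinations of the two alternatives are the four cases (i)-(iv).
-/

open MeasureTheory Set Complex
open scoped Real

theorem indicator_Ioo_add_indicator_Ioo {α M : Type*} [LinearOrder α] [AddZeroClass M]
    {l m r y : α} (f : α → M) (hlm : l ≤ m) (hmr : m ≤ r) (hy : y ≠ m) :
    (Ioo l m).indicator f y + (Ioo m r).indicator f y = (Ioo l r).indicator f y := by
  rcases hy.lt_or_gt with h | h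
  · rw [indicator_of_notMem (s := Ioo m r) (fun hy => h.not_gt hy.1), add_zero]
    exact indicator_eq_indicator (by grind) rfl
  · rw [indicator_of_notMem (s := Ioo l m) (fun hy => h.not_gt hy.2), zero_add]
    exact indicator_eq_indicator (by grind) rfl

theorem indicator_Ioo_sub {M : Type*} [One M] [Zero M] (a c x : ℝ) :
    (Ioo 0 a).indicator (1 : ℝ → M) (x - c) = (Ioo c (c + a)).indicator 1 x :=
  indicator_eq_indicator (by grind) rfl

theorem indicator_preimage_swap {α β M : Type*} [One M] [Zero M] (s : Set (α × β))
    (x : β × α) : (Prod.swap ⁻¹' s).indicator (1 : β × α → M) x = s.indicator 1 x.swap :=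
  indicator_comp_right (g := 1) Prod.swap

theorem indicator_one_smul_apply {α M : Type*} [AddCommMonoid M] [Module ℝ M] (s : Set α)
    (f : α → M) (a : α) : s.indicator (1 : α → ℝ) a • f a = s.indicator f a := by
  by_cases h : a ∈ s <;> simp [h]

def brick (a b : ℝ) : Set (ℝ × ℝ) := Ioo 0 a ×ˢ Ioo 0 b

theorem measurableSet_brick (a b : ℝ) : MeasurableSet (brick a b) :=
  measurableSet_Ioo.prod measurableSet_Ioo

theorem preimage_swap_brick (a b : ℝ) : Prod.swap ⁻¹' brick a b = brick b a :=
  preimage_swap_prod _ _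

theorem integrableOn_brick {E : Type*} [NormedAddCommGroup E] {f : ℝ × ℝ → E} (hf : Continuous f)
    (a b : ℝ) : IntegrableOn f (brick a b) :=
  (hf.continuousOn.integrableOn_compact (isCompact_Icc.prod isCompact_Icc)).mono_set
    (prod_mono Ioo_subset_Icc_self Ioo_subset_Icc_self)

def IsTiling (Ω A B : Set (ℝ × ℝ)) (T S : Finset (ℝ × ℝ)) : Prop :=
  ∀ᵐ x, Ω.indicator (1 : ℝ × ℝ → ℝ) x =
    ∑ t ∈ T, A.indicator 1 (x - t) + ∑ s ∈ S, B.indicator 1 (x - s)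

namespace IsTiling

variable {Ω A B : Set (ℝ × ℝ)} {T S : Finset (ℝ × ℝ)}

theorem symm (h : IsTiling Ω A B T S) : IsTiling Ω B A S T := by
  filter_upwards [h] with x hx
  rw [hx, add_comm]

theorem swap (h : IsTiling Ω A B T S) :
    IsTiling (Prod.swap ⁻¹' Ω) (Prod.swap ⁻¹' A) (Prod.swap ⁻¹' B)
      (T.map (Equiv.prodComm ℝ ℝ).toEmbedding) (S.map (Equiv.prodComm ℝ ℝ).toEmbedding) := by
  filter_upwards [Measure.measurePreserving_swap.quasiMeasurePreserving.ae h] with x hx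
  simp only [Finset.sum_map, indicator_preimage_swap, hx]
  rfl

theorem swap_brick {w₁ w₂ a₁ a₂ b₁ b₂ : ℝ}
    (h : IsTiling (brick w₁ w₂) (brick a₁ a₂) (brick b₁ b₂) T S) :
    IsTiling (brick w₂ w₁) (brick a₂ a₁) (brick b₂ b₁)
      (T.map (Equiv.prodComm ℝ ℝ).toEmbedding) (S.map (Equiv.prodComm ℝ ℝ).toEmbedding) := by
  simpa only [preimage_swap_brick] using h.swap

end IsTiling

section Sufficiency

theorem ae_indicator_Ioo_eq_sum_range {a : ℝ} (ha : 0 ≤ a) (c : ℝ) (m : ℕ) :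
    ∀ᵐ x, (Ioo c (c + m * a)).indicator (1 : ℝ → ℝ) x =
      ∑ i ∈ Finset.range m, (Ioo 0 a).indicator 1 (x - (c + i * a)) := by
  filter_upwards [ae_all_iff.2 fun i : ℕ => volume.ae_ne (c + i * a)] with x hx
  induction m with
  | zero => simp
  | succ m ih =>
    have hm : (0 : ℝ) ≤ m * a := by positivity
    rw [Finset.sum_range_succ, ← ih, indicator_Ioo_sub, Nat.cast_succ, add_one_mul, ← add_assoc,
      indicator_Ioo_add_indicator_Ioo _ (by linarith) (by linarith) (hx m)]

theorem exists_finset_ae_indicator_Ioo_eq_sum {a : ℝ} (ha : 0 < a) (c : ℝ) (m : ℕ) :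
    ∃ T : Finset ℝ, ∀ᵐ x, (Ioo c (c + m * a)).indicator (1 : ℝ → ℝ) x =
      ∑ t ∈ T, (Ioo 0 a).indicator 1 (x - t) := by
  classical
  refine ⟨(Finset.range m).image (fun i : ℕ => c + i * a), ?_⟩
  filter_upwards [ae_indicator_Ioo_eq_sum_range ha.le c m] with x hx
  rw [hx, Finset.sum_image fun i _ j _ hij => by simpa [ha.ne'] using hij]

theorem ae_indicator_prod_eq_sum {s s' t t' : Set ℝ} {T U : Finset ℝ}
    (hs : ∀ᵐ x, s.indicator (1 : ℝ → ℝ) x = ∑ i ∈ T, s'.indicator 1 (x - i))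
    (ht : ∀ᵐ y, t.indicator (1 : ℝ → ℝ) y = ∑ j ∈ U, t'.indicator 1 (y - j)) :
    ∀ᵐ p : ℝ × ℝ, (s ×ˢ t).indicator (1 : ℝ × ℝ → ℝ) p =
      ∑ q ∈ T ×ˢ U, (s' ×ˢ t').indicator 1 (p - q) := by
  filter_upwards [Measure.quasiMeasurePreserving_fst.ae hs,
    Measure.quasiMeasurePreserving_snd.ae ht] with p hx hy
  rw [← Prod.mk.eta (p := p), indicator_prod_one, hx, hy, Finset.sum_mul_sum, Finset.sum_product]
  simp only [Prod.mk_sub_mk, indicator_prod_one]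

theorem exists_ae_indicator_prod_Ioo_eq_sum {a b : ℝ} (ha : 0 < a) (hb : 0 < b) (c d : ℝ)
    (m n : ℕ) : ∃ T : Finset (ℝ × ℝ), ∀ᵐ p,
      (Ioo c (c + m * a) ×ˢ Ioo d (d + n * b)).indicator (1 : ℝ × ℝ → ℝ) p =
        ∑ t ∈ T, (brick a b).indicator 1 (p - t) := by
  obtain ⟨T, hT⟩ := exists_finset_ae_indicator_Ioo_eq_sum ha c m
  obtain ⟨U, hU⟩ := exists_finset_ae_indicator_Ioo_eq_sum hb d n
  exact ⟨T ×ˢ U, ae_indicator_prod_eq_sum hT hU⟩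

theorem ae_indicator_prod_Ioo_eq_add (s : Set ℝ) {l m r : ℝ} (hlm : l ≤ m) (hmr : m ≤ r) :
    ∀ᵐ p : ℝ × ℝ, (s ×ˢ Ioo l r).indicator (1 : ℝ × ℝ → ℝ) p =
      (s ×ˢ Ioo l m).indicator 1 p + (s ×ˢ Ioo m r).indicator 1 p := by
  filter_upwards [Measure.quasiMeasurePreserving_snd.ae (volume.ae_ne m)] with p hp
  rw [← Prod.mk.eta (p := p)]
  simp only [indicator_prod_one, ← mul_add, indicator_Ioo_add_indicator_Ioo _ hlm hmr hp]

theorem exists_nat_mul_eq_of_div_eq_int {w a : ℝ} (hw : 0 ≤ w) (ha : 0 < a)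
    (h : ∃ m : ℤ, w / a = m) : ∃ M : ℕ, M * a = w := by
  obtain ⟨m, hm⟩ := h
  have hm₀ : 0 ≤ m := by exact_mod_cast hm ▸ div_nonneg hw ha.le
  refine ⟨m.toNat, ?_⟩
  rw [← Int.cast_natCast, Int.toNat_of_nonneg hm₀, ← hm, div_mul_cancel₀ _ ha.ne']

theorem exists_isTiling_brick_of_div_eq_int {w₁ w₂ a₁ a₂ : ℝ} (hw₁ : 0 ≤ w₁) (hw₂ : 0 ≤ w₂)
    (ha₁ : 0 < a₁) (ha₂ : 0 < a₂) (h₁ : ∃ m : ℤ, w₁ / a₁ = m) (h₂ : ∃ m : ℤ, w₂ / a₂ = m)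
    (B : Set (ℝ × ℝ)) : ∃ T S, IsTiling (brick w₁ w₂) (brick a₁ a₂) B T S := by
  obtain ⟨M, rfl⟩ := exists_nat_mul_eq_of_div_eq_int hw₁ ha₁ h₁
  obtain ⟨N, rfl⟩ := exists_nat_mul_eq_of_div_eq_int hw₂ ha₂ h₂
  obtain ⟨T, hT⟩ := exists_ae_indicator_prod_Ioo_eq_sum ha₁ ha₂ 0 0 M N
  refine ⟨T, ∅, ?_⟩
  simpa [IsTiling, brick] using hT

theorem exists_isTiling_brick_of_cut {w₁ w₂ a₁ a₂ b₁ b₂ : ℝ} (hw₁ : 0 ≤ w₁)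
    (ha₁ : 0 < a₁) (ha₂ : 0 < a₂) (hb₁ : 0 < b₁) (hb₂ : 0 < b₂)
    (hA : ∃ m : ℤ, w₁ / a₁ = m) (hB : ∃ m : ℤ, w₁ / b₁ = m) {k l : ℕ}
    (hkl : k * a₂ + l * b₂ = w₂) :
    ∃ T S, IsTiling (brick w₁ w₂) (brick a₁ a₂) (brick b₁ b₂) T S := by
  obtain ⟨M, hM⟩ := exists_nat_mul_eq_of_div_eq_int hw₁ ha₁ hA
  obtain ⟨N, hN⟩ := exists_nat_mul_eq_of_div_eq_int hw₁ hb₁ hB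
  obtain ⟨T, hT⟩ := exists_ae_indicator_prod_Ioo_eq_sum ha₁ ha₂ 0 0 M k
  obtain ⟨S, hS⟩ := exists_ae_indicator_prod_Ioo_eq_sum hb₁ hb₂ 0 (k * a₂) N l
  rw [zero_add, zero_add, hM] at hT
  rw [zero_add, hN, hkl] at hS
  refine ⟨T, S, ?_⟩
  filter_upwards [hT, hS, ae_indicator_prod_Ioo_eq_add (Ioo 0 w₁) (by positivity)
    (hkl ▸ le_add_of_nonneg_right (by positivity))] with p hpT hpS hp
  rw [brick, hp, hpT, hpS]

end Sufficiency

section Slice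

theorem integrable_indicator_Ioo_sub (a c : ℝ) :
    Integrable fun y => (Ioo 0 a).indicator (1 : ℝ → ℝ) (y - c) :=
  ((integrable_indicator_iff measurableSet_Ioo).2
    (integrableOn_const measure_Ioo_lt_top.ne)).comp_sub_right c

theorem integral_indicator_Ioo_sub {a : ℝ} (ha : 0 ≤ a) (c : ℝ) :
    ∫ y, (Ioo 0 a).indicator (1 : ℝ → ℝ) (y - c) = a := by
  rw [integral_sub_right_eq_self (fun y => (Ioo 0 a).indicator (1 : ℝ → ℝ) y),
    integral_indicator_one measurableSet_Ioo, Real.volume_real_Ioo_of_le ha, sub_zero]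

theorem card_mul_add_card_mul_eq_of_ae_indicator_eq {ι κ : Type*} {w a b : ℝ} (hw : 0 ≤ w)
    (ha : 0 ≤ a) (hb : 0 ≤ b) {I : Finset ι} {J : Finset κ} {f : ι → ℝ} {g : κ → ℝ}
    (h : ∀ᵐ y, (Ioo 0 w).indicator (1 : ℝ → ℝ) y =
      ∑ i ∈ I, (Ioo 0 a).indicator 1 (y - f i) + ∑ j ∈ J, (Ioo 0 b).indicator 1 (y - g j)) :
    I.card * a + J.card * b = w := by
  have hI := fun i (_ : i ∈ I) => integrable_indicator_Ioo_sub a (f i)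
  have hJ := fun j (_ : j ∈ J) => integrable_indicator_Ioo_sub b (g j)
  have hint := integral_congr_ae h
  rw [integral_add (integrable_finsetSum _ hI) (integrable_finsetSum _ hJ),
    integral_finsetSum _ hI, integral_finsetSum _ hJ, integral_indicator_one measurableSet_Ioo,
    Real.volume_real_Ioo_of_le hw, sub_zero] at hint
  simp only [integral_indicator_Ioo_sub ha, integral_indicator_Ioo_sub hb, Finset.sum_const,
    nsmul_eq_mul] at hint
  exact hint.symm

theorem sum_indicator_brick_sub {a b : ℝ} (T : Finset (ℝ × ℝ)) (x y : ℝ)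
    [DecidablePred fun t : ℝ × ℝ => x - t.1 ∈ Ioo 0 a] :
    ∑ t ∈ T, (brick a b).indicator (1 : ℝ × ℝ → ℝ) ((x, y) - t) =
      ∑ t ∈ T with x - t.1 ∈ Ioo 0 a, (Ioo 0 b).indicator 1 (y - t.2) := by
  rw [Finset.sum_filter]
  refine Finset.sum_congr rfl fun t _ => ?_
  rw [← Prod.mk.eta (p := t), Prod.mk_sub_mk, brick, indicator_prod_one]
  split_ifs with h <;> simp [h]

theorem IsTiling.exists_nat_mul_add_nat_mul_eq {w₁ w₂ a₁ a₂ b₁ b₂ : ℝ} {T S : Finset (ℝ × ℝ)}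
    (hw₁ : 0 < w₁) (hw₂ : 0 ≤ w₂) (ha₂ : 0 ≤ a₂) (hb₂ : 0 ≤ b₂)
    (h : IsTiling (brick w₁ w₂) (brick a₁ a₂) (brick b₁ b₂) T S) :
    ∃ k l : ℕ, k * a₂ + l * b₂ = w₂ := by
  classical
  have : (ae (volume.restrict (Ioo 0 w₁))).NeBot := ae_restrict_neBot.2 (by simp [hw₁])
  obtain ⟨x, hx, hslice⟩ :=
    ((ae_restrict_mem (μ := volume) (measurableSet_Ioo (a := 0) (b := w₁))).and
      (ae_restrict_of_ae (Measure.ae_ae_of_ae_prod h))).exists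
  refine ⟨_, _, card_mul_add_card_mul_eq_of_ae_indicator_eq hw₂ ha₂ hb₂
    (I := {t ∈ T | x - t.1 ∈ Ioo 0 a₁}) (J := {s ∈ S | x - s.1 ∈ Ioo 0 b₁})
    (f := Prod.snd) (g := Prod.snd) ?_⟩
  filter_upwards [hslice] with y hy
  rw [← sum_indicator_brick_sub, ← sum_indicator_brick_sub, ← hy, brick, indicator_prod_one,
    indicator_of_mem hx, Pi.one_apply, one_mul]

end Slice

section Fourier

variable {E : Type*} [NormedAddCommGroup E] [NormedSpace ℝ E] {φ : ℝ × ℝ → E}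

theorem indicator_sub_smul_eq (C : Set (ℝ × ℝ)) (x t : ℝ × ℝ) :
    C.indicator (1 : ℝ × ℝ → ℝ) (x - t) • φ x = C.indicator (fun y => φ (y + t)) (x - t) := by
  rw [← indicator_one_smul_apply C (fun y => φ (y + t)), sub_add_cancel]

theorem integrable_indicator_sub_smul {C : Set (ℝ × ℝ)} (hC : MeasurableSet C) {t : ℝ × ℝ}
    (hφ : IntegrableOn (fun x => φ (x + t)) C) :
    Integrable fun x => C.indicator (1 : ℝ × ℝ → ℝ) (x - t) • φ x := by
  simpa only [indicator_sub_smul_eq] using (hφ.integrable_indicator hC).comp_sub_right t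

theorem integral_indicator_sub_smul {C : Set (ℝ × ℝ)} (hC : MeasurableSet C) (t : ℝ × ℝ) :
    ∫ x, C.indicator (1 : ℝ × ℝ → ℝ) (x - t) • φ x = ∫ x in C, φ (x + t) := by
  simp only [indicator_sub_smul_eq]
  rw [integral_sub_right_eq_self (fun y => C.indicator (fun x => φ (x + t)) y) t,
    integral_indicator hC]

theorem IsTiling.setIntegral_eq {Ω A B : Set (ℝ × ℝ)} {T S : Finset (ℝ × ℝ)}
    (h : IsTiling Ω A B T S) (hΩ : MeasurableSet Ω) (hA : MeasurableSet A) (hB : MeasurableSet B)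
    (hφA : ∀ t, IntegrableOn (fun x => φ (x + t)) A)
    (hφB : ∀ s, IntegrableOn (fun x => φ (x + s)) B) :
    ∫ x in Ω, φ x = ∑ t ∈ T, (∫ x in A, φ (x + t)) + ∑ s ∈ S, ∫ x in B, φ (x + s) := by
  have hA' := fun t (_ : t ∈ T) => integrable_indicator_sub_smul hA (hφA t)
  have hB' := fun s (_ : s ∈ S) => integrable_indicator_sub_smul hB (hφB s)
  calc ∫ x in Ω, φ x = ∫ x, Ω.indicator (1 : ℝ × ℝ → ℝ) x • φ x := by
        simp only [indicator_one_smul_apply, integral_indicator hΩ]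
    _ = ∫ x, ((∑ t ∈ T, A.indicator 1 (x - t) • φ x) + ∑ s ∈ S, B.indicator 1 (x - s) • φ x) := by
        refine integral_congr_ae ?_
        filter_upwards [h] with x hx
        rw [hx, add_smul, Finset.sum_smul, Finset.sum_smul]
    _ = _ := by
        rw [integral_add (integrable_finsetSum _ hA') (integrable_finsetSum _ hB'),
          integral_finsetSum _ hA', integral_finsetSum _ hB']
        simp only [integral_indicator_sub_smul hA, integral_indicator_sub_smul hB]

theorem integral_Ioo_exp_eq_zero_iff {u w : ℝ} (hu : u ≠ 0) (hw : 0 ≤ w) :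
    ∫ x in Ioo 0 w, exp (2 * π * I / u * x) = 0 ↔ ∃ m : ℤ, w / u = m := by
  have hκ : 2 * π * I / u ≠ 0 := div_ne_zero two_pi_I_ne_zero (ofReal_ne_zero.2 hu)
  rw [← integral_Ioc_eq_integral_Ioo, ← intervalIntegral.integral_of_le hw,
    integral_exp_mul_complex hκ, div_eq_zero_iff, or_iff_left hκ, ofReal_zero, mul_zero, exp_zero,
    sub_eq_zero, exp_eq_one_iff]
  refine exists_congr fun m => ?_
  rw [div_mul_eq_mul_div, div_eq_iff (ofReal_ne_zero.2 hu), div_eq_iff hu,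
    show (m : ℂ) * (2 * π * I) * u = 2 * π * I * (m * u) by ring,
    mul_right_inj' two_pi_I_ne_zero]
  norm_cast

theorem setIntegral_brick_exp_mul_exp (u v a b : ℝ) (t : ℝ × ℝ) :
    ∫ x in brick a b, exp (2 * π * I / u * (x + t).1) * exp (2 * π * I / v * (x + t).2) =
      exp (2 * π * I / u * t.1) * exp (2 * π * I / v * t.2) *
        ((∫ x in Ioo 0 a, exp (2 * π * I / u * x)) * ∫ y in Ioo 0 b, exp (2 * π * I / v * y)) := by
  simp only [Prod.fst_add, Prod.snd_add, ofReal_add, mul_add, exp_add]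
  rw [← setIntegral_prod_mul, ← integral_const_mul]
  exact setIntegral_congr_fun (measurableSet_brick a b) fun x _ => by ring

theorem IsTiling.exists_int_div_eq_or {w₁ w₂ a₁ a₂ b₁ b₂ : ℝ} {T S : Finset (ℝ × ℝ)}
    (hw₁ : 0 ≤ w₁) (hw₂ : 0 ≤ w₂) (ha₁ : 0 < a₁) (hb₂ : 0 < b₂)
    (h : IsTiling (brick w₁ w₂) (brick a₁ a₂) (brick b₁ b₂) T S) :
    (∃ m : ℤ, w₁ / a₁ = m) ∨ ∃ m : ℤ, w₂ / b₂ = m := by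
  have hint := h.setIntegral_eq
    (φ := fun p => exp (2 * π * I / a₁ * p.1) * exp (2 * π * I / b₂ * p.2))
    (measurableSet_brick _ _) (measurableSet_brick _ _) (measurableSet_brick _ _)
    (fun t => integrableOn_brick (by fun_prop) _ _) (fun s => integrableOn_brick (by fun_prop) _ _)
  have hQ := setIntegral_brick_exp_mul_exp a₁ b₂ w₁ w₂ 0
  have hA : ∫ x in Ioo 0 a₁, exp (2 * π * I / a₁ * x) = 0 :=
    (integral_Ioo_exp_eq_zero_iff ha₁.ne' ha₁.le).2 ⟨1, by simp [ha₁.ne']⟩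
  have hB : ∫ y in Ioo 0 b₂, exp (2 * π * I / b₂ * y) = 0 :=
    (integral_Ioo_exp_eq_zero_iff hb₂.ne' hb₂.le).2 ⟨1, by simp [hb₂.ne']⟩
  simp only [add_zero, Prod.fst_zero, Prod.snd_zero, ofReal_zero, mul_zero, exp_zero,
    one_mul] at hQ
  simp only [hQ, setIntegral_brick_exp_mul_exp, hA, hB, mul_zero, zero_mul, Finset.sum_const_zero,
    add_zero, mul_eq_zero, integral_Ioo_exp_eq_zero_iff ha₁.ne' hw₁,
    integral_Ioo_exp_eq_zero_iff hb₂.ne' hw₂] at hint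
  exact hint

end Fourier

/-- Bower–Michael theorem: the unit square `Q = (0,1)²` can be tiled by
translates of the two bricks `A = (0,a₁)×(0,a₂)` and `B = (0,b₁)×(0,b₂)` iff
`Q` can be cut by a horizontal or vertical line into two rectangles, each
tiled by translates of bricks of a single type. -/
theorem stmt_11 (a₁ a₂ b₁ b₂ : ℝ) (ha₁ : 0 < a₁) (ha₂ : 0 < a₂)
    (hb₁ : 0 < b₁) (hb₂ : 0 < b₂) :
    (∃ T S : Finset (ℝ × ℝ),
      ∀ᵐ x ∂(volume : Measure (ℝ × ℝ)),
        (Ioo (0:ℝ) 1 ×ˢ Ioo (0:ℝ) 1).indicator (fun _ => (1:ℝ)) x =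
          (∑ t ∈ T, (Ioo 0 a₁ ×ˢ Ioo 0 a₂).indicator (fun _ => (1:ℝ)) (x - t)) +
          (∑ s ∈ S, (Ioo 0 b₁ ×ˢ Ioo 0 b₂).indicator (fun _ => (1:ℝ)) (x - s))) ↔
    (((∃ m : ℤ, 1 / a₁ = (m : ℝ)) ∧ (∃ m : ℤ, 1 / a₂ = (m : ℝ))) ∨
     ((∃ m : ℤ, 1 / b₁ = (m : ℝ)) ∧ (∃ m : ℤ, 1 / b₂ = (m : ℝ))) ∨
     ((∃ m : ℤ, 1 / a₁ = (m : ℝ)) ∧ (∃ m : ℤ, 1 / b₁ = (m : ℝ)) ∧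
       ∃ k l : ℕ, (k : ℝ) * a₂ + (l : ℝ) * b₂ = 1) ∨
     ((∃ m : ℤ, 1 / a₂ = (m : ℝ)) ∧ (∃ m : ℤ, 1 / b₂ = (m : ℝ)) ∧
       ∃ k l : ℕ, (k : ℝ) * a₁ + (l : ℝ) * b₁ = 1)) := by
  change (∃ T S, IsTiling (brick 1 1) (brick a₁ a₂) (brick b₁ b₂) T S) ↔ _
  constructor
  · rintro ⟨T, S, h⟩
    have hA₁B₂ := h.exists_int_div_eq_or zero_le_one zero_le_one ha₁ hb₂
    have hB₁A₂ := h.symm.exists_int_div_eq_or zero_le_one zero_le_one hb₁ ha₂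
    have hkl₂ := h.exists_nat_mul_add_nat_mul_eq one_pos zero_le_one ha₂.le hb₂.le
    have hkl₁ := h.swap_brick.exists_nat_mul_add_nat_mul_eq one_pos zero_le_one ha₁.le hb₁.le
    rcases hA₁B₂ with hA₁ | hB₂ <;> rcases hB₁A₂ with hB₁ | hA₂
    · exact Or.inr (Or.inr (Or.inl ⟨hA₁, hB₁, hkl₂⟩))
    · exact Or.inl ⟨hA₁, hA₂⟩
    · exact Or.inr (Or.inl ⟨hB₁, hB₂⟩)
    · exact Or.inr (Or.inr (Or.inr ⟨hA₂, hB₂, hkl₁⟩))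
  · rintro (⟨hA₁, hA₂⟩ | ⟨hB₁, hB₂⟩ | ⟨hA₁, hB₁, k, l, hkl⟩ | ⟨hA₂, hB₂, k, l, hkl⟩)
    · exact exists_isTiling_brick_of_div_eq_int zero_le_one zero_le_one ha₁ ha₂ hA₁ hA₂ _
    · obtain ⟨S, T, h⟩ :=
        exists_isTiling_brick_of_div_eq_int zero_le_one zero_le_one hb₁ hb₂ hB₁ hB₂ (brick a₁ a₂)
      exact ⟨T, S, h.symm⟩
    · exact exists_isTiling_brick_of_cut zero_le_one ha₁ ha₂ hb₁ hb₂ hA₁ hB₁ hkl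
    · obtain ⟨T, S, h⟩ := exists_isTiling_brick_of_cut zero_le_one ha₂ ha₁ hb₂ hb₁ hA₂ hB₂ hkl
      exact ⟨_, _, h.swap_brick⟩
end

section
/- Let A = {(0,0), (2,0), (0,2), (2,2)} ⊆ ℤ². There exists a set Λ ⊆ ℤ² such that A ⊕ Λ = ℤ² is a tiling at level 1 and Λ has no period at all: for every v ∈ ℤ² with v ≠ (0,0), Λ + v ≠ Λ. -/
def Ptile (x y : ℤ) : Prop :=
  (y % 4 = 0 ∧ ((y = 0 ∧ x % 4 = 2) ∨ (y ≠ 0 ∧ x % 4 = 0))) ∨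
  (x % 4 = 1 ∧ ((x = 1 ∧ y % 4 = 2) ∨ (x ≠ 1 ∧ y % 4 = 0))) ∨
  (x % 4 = 0 ∧ ((x = 0 ∧ y % 4 = 3) ∨ (x ≠ 0 ∧ y % 4 = 1))) ∨
  (x % 4 = 1 ∧ ((x = 1 ∧ y % 4 = 3) ∨ (x ≠ 1 ∧ y % 4 = 1)))

set_option maxHeartbeats 4000000 in
lemma ptile_exists (X Y : ℤ) :
    Ptile (X - 0) (Y - 0) ∨ Ptile (X - 2) (Y - 0) ∨
    Ptile (X - 0) (Y - 2) ∨ Ptile (X - 2) (Y - 2) := by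
  have hx : X % 4 = 0 ∨ X % 4 = 1 ∨ X % 4 = 2 ∨ X % 4 = 3 := by omega
  have hy : Y % 4 = 0 ∨ Y % 4 = 1 ∨ Y % 4 = 2 ∨ Y % 4 = 3 := by omega
  rcases hx with hx | hx | hx | hx <;> rcases hy with hy | hy | hy | hy
  · by_cases hf : Y = 0
    · exact (Or.inr ∘ Or.inl) (by unfold Ptile; omega)
    · exact Or.inl (by unfold Ptile; omega)
  · by_cases hf : X = 0
    · exact (Or.inr ∘ Or.inr ∘ Or.inl) (by unfold Ptile; omega)
    · exact Or.inl (by unfold Ptile; omega)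
  · by_cases hf : Y = 2
    · exact (Or.inr ∘ Or.inr ∘ Or.inr) (by unfold Ptile; omega)
    · exact (Or.inr ∘ Or.inr ∘ Or.inl) (by unfold Ptile; omega)
  · by_cases hf : X = 0
    · exact Or.inl (by unfold Ptile; omega)
    · exact (Or.inr ∘ Or.inr ∘ Or.inl) (by unfold Ptile; omega)
  · by_cases hf : X = 1
    · exact (Or.inr ∘ Or.inr ∘ Or.inl) (by unfold Ptile; omega)
    · exact Or.inl (by unfold Ptile; omega)
  · by_cases hf : X = 1
    · exact (Or.inr ∘ Or.inr ∘ Or.inl) (by unfold Ptile; omega)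
    · exact Or.inl (by unfold Ptile; omega)
  · by_cases hf : X = 1
    · exact Or.inl (by unfold Ptile; omega)
    · exact (Or.inr ∘ Or.inr ∘ Or.inl) (by unfold Ptile; omega)
  · by_cases hf : X = 1
    · exact Or.inl (by unfold Ptile; omega)
    · exact (Or.inr ∘ Or.inr ∘ Or.inl) (by unfold Ptile; omega)
  · by_cases hf : Y = 0
    · exact Or.inl (by unfold Ptile; omega)
    · exact (Or.inr ∘ Or.inl) (by unfold Ptile; omega)
  · by_cases hf : X = 2
    · exact (Or.inr ∘ Or.inr ∘ Or.inr) (by unfold Ptile; omega)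
    · exact (Or.inr ∘ Or.inl) (by unfold Ptile; omega)
  · by_cases hf : Y = 2
    · exact (Or.inr ∘ Or.inr ∘ Or.inl) (by unfold Ptile; omega)
    · exact (Or.inr ∘ Or.inr ∘ Or.inr) (by unfold Ptile; omega)
  · by_cases hf : X = 2
    · exact (Or.inr ∘ Or.inl) (by unfold Ptile; omega)
    · exact (Or.inr ∘ Or.inr ∘ Or.inr) (by unfold Ptile; omega)
  · by_cases hf : X = 3
    · exact (Or.inr ∘ Or.inr ∘ Or.inr) (by unfold Ptile; omega)
    · exact (Or.inr ∘ Or.inl) (by unfold Ptile; omega)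
  · by_cases hf : X = 3
    · exact (Or.inr ∘ Or.inr ∘ Or.inr) (by unfold Ptile; omega)
    · exact (Or.inr ∘ Or.inl) (by unfold Ptile; omega)
  · by_cases hf : X = 3
    · exact (Or.inr ∘ Or.inl) (by unfold Ptile; omega)
    · exact (Or.inr ∘ Or.inr ∘ Or.inr) (by unfold Ptile; omega)
  · by_cases hf : X = 3
    · exact (Or.inr ∘ Or.inl) (by unfold Ptile; omega)
    · exact (Or.inr ∘ Or.inr ∘ Or.inr) (by unfold Ptile; omega)

set_option maxHeartbeats 4000000 in
lemma ptile_unique (X Y a1 a2 b1 b2 : ℤ)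
    (h1 : a1 = 0 ∨ a1 = 2) (h2 : a2 = 0 ∨ a2 = 2)
    (h3 : b1 = 0 ∨ b1 = 2) (h4 : b2 = 0 ∨ b2 = 2)
    (h5 : Ptile (X - a1) (Y - a2)) (h6 : Ptile (X - b1) (Y - b2)) :
    a1 = b1 ∧ a2 = b2 := by
  unfold Ptile at h5 h6
  rcases h1 with h1 | h1 <;> rcases h2 with h2 | h2 <;>
    rcases h3 with h3 | h3 <;> rcases h4 with h4 | h4 <;>
    subst h1 <;> subst h2 <;> subst h3 <;> subst h4 <;> omega

set_option maxHeartbeats 4000000 in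
/-- The square-like tile `A = {(0,0), (2,0), (0,2), (2,2)}` admits a tiling of
`ℤ²` at level 1 whose translation set has no period at all. -/
theorem stmt_12 :
    ∃ Λ : Set (ℤ × ℤ),
      (∀ x : ℤ × ℤ, ∃! p : (ℤ × ℤ) × (ℤ × ℤ),
        p.1 ∈ ({(0,0), (2,0), (0,2), (2,2)} : Set (ℤ × ℤ)) ∧
        p.2 ∈ Λ ∧ p.1 + p.2 = x) ∧
      (∀ v : ℤ × ℤ, v ≠ (0,0) → (fun l => l + v) '' Λ ≠ Λ) := by
  refine ⟨{p : ℤ × ℤ | Ptile p.1 p.2}, ?_, ?_⟩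
  · rintro ⟨X, Y⟩
    have mk : ∀ a1 a2 : ℤ, (a1 = 0 ∨ a1 = 2) → (a2 = 0 ∨ a2 = 2) →
        Ptile (X - a1) (Y - a2) →
        ∃! p : (ℤ × ℤ) × (ℤ × ℤ),
          p.1 ∈ ({(0,0), (2,0), (0,2), (2,2)} : Set (ℤ × ℤ)) ∧
          p.2 ∈ {p : ℤ × ℤ | Ptile p.1 p.2} ∧ p.1 + p.2 = (X, Y) := by
      intro a1 a2 h1 h2 hP
      refine ⟨((a1, a2), (X - a1, Y - a2)), ⟨?_, hP, ?_⟩, ?_⟩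
      · simp only [Set.mem_insert_iff, Set.mem_singleton_iff, Prod.mk.injEq]
        rcases h1 with h1 | h1 <;> rcases h2 with h2 | h2 <;> subst h1 <;> subst h2 <;> simp
      · simp only [Prod.mk_add_mk, Prod.mk.injEq]; constructor <;> ring
      · rintro ⟨⟨b1, b2⟩, ⟨l1, l2⟩⟩ ⟨hb, hl, hs⟩
        simp only [Set.mem_insert_iff, Set.mem_singleton_iff, Prod.mk.injEq] at hb
        have e1 : b1 + l1 = X := congrArg Prod.fst hs
        have e2 : b2 + l2 = Y := congrArg Prod.snd hs
        have hb1 : b1 = 0 ∨ b1 = 2 := by omega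
        have hb2 : b2 = 0 ∨ b2 = 2 := by omega
        have hl1 : l1 = X - b1 := by omega
        have hl2 : l2 = Y - b2 := by omega
        subst hl1; subst hl2
        have hbP : Ptile (X - b1) (Y - b2) := hl
        obtain ⟨q1, q2⟩ := ptile_unique X Y b1 b2 a1 a2 hb1 hb2 h1 h2 hbP hP
        subst q1; subst q2; rfl
    rcases ptile_exists X Y with h | h | h | h
    · exact mk 0 0 (Or.inl rfl) (Or.inl rfl) h
    · exact mk 2 0 (Or.inr rfl) (Or.inl rfl) h
    · exact mk 0 2 (Or.inl rfl) (Or.inr rfl) h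
    · exact mk 2 2 (Or.inr rfl) (Or.inr rfl) h
  · rintro ⟨s, t⟩ hv hEq
    have h : ∀ a b : ℤ, Ptile a b ↔ Ptile (a + s) (b + t) := by
      intro a b
      constructor
      · intro hq
        have : ((a, b) : ℤ × ℤ) + (s, t) ∈
            (fun l => l + (s, t)) '' {p : ℤ × ℤ | Ptile p.1 p.2} := ⟨(a, b), hq, rfl⟩
        rw [hEq] at this
        exact this
      · intro hq
        have hmem : ((a, b) : ℤ × ℤ) + (s, t) ∈ {p : ℤ × ℤ | Ptile p.1 p.2} := hq
        rw [← hEq] at hmem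
        obtain ⟨l, hl, hle⟩ := hmem
        have h1 : l.1 + s = a + s := congrArg Prod.fst hle
        have h2 : l.2 + t = b + t := congrArg Prod.snd hle
        have : l = (a, b) := Prod.ext (by omega) (by omega)
        rwa [this] at hl
    have hv' : s ≠ 0 ∨ t ≠ 0 := by
      by_contra hc
      push_neg at hc
      exact hv (by rw [hc.1, hc.2])
    set N : ℤ := 4 * ((s.natAbs : ℤ) + (t.natAbs : ℤ) + 1) with hN
    have hN4 : N % 4 = 0 := by omega
    have hNge : N ≥ 4 := by omega
    have hNs : N + s ≥ 4 := by omega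
    have hNt : N + t ≥ 4 := by omega
    have j1 : Ptile (N + s) (N + t) := (h N N).mp (by unfold Ptile; omega)
    have j2 : Ptile (N + 1 + s) (N + t) := (h (N + 1) N).mp (by unfold Ptile; omega)
    have j3 : Ptile (N + s) (N + 1 + t) := (h N (N + 1)).mp (by unfold Ptile; omega)
    have hs4 : s % 4 = 0 ∧ t % 4 = 0 := by
      unfold Ptile at j1 j2 j3
      omega
    have j4 : ¬ Ptile (0 + s) (N + 1 + t) := by
      intro hp
      have h0 : Ptile 0 (N + 1) := (h 0 (N + 1)).mpr hp
      unfold Ptile at h0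
      omega
    have hs0 : s = 0 := by
      by_contra hs
      apply j4
      unfold Ptile
      omega
    have j5 : ¬ Ptile (N + s) (0 + t) := by
      intro hp
      have h0 : Ptile N 0 := (h N 0).mpr hp
      unfold Ptile at h0
      omega
    have ht0 : t = 0 := by
      by_contra ht
      apply j5
      unfold Ptile
      omega
    exact hv'.elim (fun hc => hc hs0) (fun hc => hc ht0)
end

section
/- Let A ⊆ ℤ² be a finite nonempty set. Suppose that for every n ≥ 1 there exists a set B_n ⊆ ℤ² such that the translates A + β, β ∈ B_n, are pairwise disjoint and their union contains the square Q_n = [−n, n]² ∩ ℤ². Then A tiles ℤ²: there exists B ⊆ ℤ² such that every point of ℤ² lies in exactly one translate A + β, β ∈ B. -/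
/-- If a finite nonempty `A ⊆ ℤ²` can cover each square `Qₙ = [-n,n]² ∩ ℤ²`
by pairwise disjoint translates, then `A` tiles `ℤ²`. -/
theorem stmt_13 (A : Finset (ℤ × ℤ)) (hA : A.Nonempty)
    (h : ∀ n : ℕ, 1 ≤ n → ∃ B : Set (ℤ × ℤ),
      (∀ β ∈ B, ∀ β' ∈ B, β ≠ β' → ∀ a ∈ A, ∀ a' ∈ A, a + β ≠ a' + β') ∧
      (∀ x : ℤ × ℤ, |x.1| ≤ (n : ℤ) → |x.2| ≤ (n : ℤ) →
        ∃ a ∈ A, ∃ β ∈ B, a + β = x)) :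
    ∃ B : Set (ℤ × ℤ), ∀ x : ℤ × ℤ,
      ∃! p : (ℤ × ℤ) × (ℤ × ℤ), p.1 ∈ A ∧ p.2 ∈ B ∧ p.1 + p.2 = x := by
  classical
  have h' : ∀ n : ℕ, ∃ B : Set (ℤ × ℤ),
      (∀ β ∈ B, ∀ β' ∈ B, β ≠ β' → ∀ a ∈ A, ∀ a' ∈ A, a + β ≠ a' + β') ∧
      (∀ x : ℤ × ℤ, |x.1| ≤ ((n+1 : ℕ) : ℤ) → |x.2| ≤ ((n+1 : ℕ) : ℤ) →
        ∃ a ∈ A, ∃ β ∈ B, a + β = x) := fun n => h (n+1) (Nat.le_add_left 1 n)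
  choose C hdisj hcov using h'
  let U : Ultrafilter ℕ := Ultrafilter.of Filter.atTop
  have hU : ∀ s ∈ Filter.atTop, s ∈ U := fun s hs => Ultrafilter.of_le Filter.atTop hs
  refine ⟨{β | {n | β ∈ C n} ∈ U}, fun x => ?_⟩
  -- the set of n where x is in the (n+1)-square
  set T : Set ℕ := {n | |x.1| ≤ ((n+1 : ℕ) : ℤ) ∧ |x.2| ≤ ((n+1 : ℕ) : ℤ)} with hT
  have hTU : T ∈ U := by
    apply hU
    refine Filter.mem_of_superset (Filter.mem_atTop (x.1.natAbs + x.2.natAbs)) ?_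
    intro n hn
    simp only [hT, Set.mem_setOf_eq, Int.abs_eq_natAbs] at hn ⊢
    omega
  -- choose for each n ∈ T an element a of A covering x
  have hsel : ∀ n ∈ T, ∃ a ∈ A, x - a ∈ C n := by
    intro n hn
    obtain ⟨a, ha, β, hβ, hab⟩ := hcov n x hn.1 hn.2
    exact ⟨a, ha, by rw [← hab]; simpa using hβ⟩
  choose! f hfA hfC using hsel
  -- pigeonhole on the ultrafilter
  have hbig : (⋃ a ∈ (A : Set (ℤ × ℤ)), (T ∩ {n | f n = a})) ∈ U := by
    refine Filter.mem_of_superset hTU ?_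
    intro n hn
    exact Set.mem_biUnion (hfA n hn) ⟨hn, rfl⟩
  obtain ⟨a, haA, haU⟩ :=
    (Ultrafilter.finite_biUnion_mem_iff A.finite_toSet).mp hbig
  have hBmem : {n | x - a ∈ C n} ∈ U := by
    refine Filter.mem_of_superset haU ?_
    rintro n ⟨hnT, hna⟩
    have := hfC n hnT
    rwa [hna] at this
  refine ⟨(a, x - a), ⟨haA, hBmem, by simp⟩, ?_⟩
  rintro ⟨a', β'⟩ ⟨ha', hβ', hsum⟩
  -- uniqueness
  have hboth : ({n | β' ∈ C n} ∩ {n | x - a ∈ C n}) ∈ U := Filter.inter_mem hβ' hBmem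
  obtain ⟨n, hn1, hn2⟩ := Ultrafilter.nonempty_of_mem hboth
  have hβeq : β' = x - a := by
    by_contra hne
    exact hdisj n β' hn1 (x - a) hn2 hne a' ha' a haA
      (by simp only at hsum; rw [hsum]; ring)
  have : a' = a := by
    have := hsum
    simp only at this
    rw [hβeq] at this
    have : a' + (x - a) = x := this
    linear_combination this
  simp [Prod.ext_iff, hβeq, this]
end

section
/- Let n ≥ 1, d ≥ 1, and let S, Q be finite subsets of (ℤ/nℤ)^d with |S| = |Q| = r. For x, y ∈ (ℤ/nℤ)^d write e(x·y) = exp(2πi·(x₁y₁ + ⋯ + x_d y_d)/n) (well defined via integer representatives). Suppose (S, Q) is a spectral pair, i.e. for all distinct q, q′ ∈ Q, ∑_{s ∈ S} e((q − q′)·s) = 0. Then for every x ∈ (ℤ/nℤ)^d: ∑_{q ∈ Q} |∑_{s ∈ S} e((x − q)·s)|² = r². In other words, the function |χ̂_S|² tiles (ℤ/nℤ)^d at level |S|² when translated along Q. -/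
/-!
With `A = (ψ(q·s))_{q ∈ Q, s ∈ S}`, the spectral condition says exactly that `A Aᴴ = r • 1`.
Since `A` is square, also `Aᴴ A = r • 1`. The sum in question is `‖A w‖²` for the unimodular
vector `w s = ψ(-x·s)`, hence equals `r ‖w‖² = r²`.
-/

open Complex Finset Matrix

namespace Matrix

variable {m n : Type*} [Fintype m] [Fintype n] [DecidableEq n]

theorem mul_eq_smul_one_comm_of_card_eq {K : Type*} [Field K] [DecidableEq m]
    {A : Matrix m n K} {B : Matrix n m K} {c : K} (hc : c ≠ 0)
    (hcard : Fintype.card m = Fintype.card n) (h : A * B = c • 1) : B * A = c • 1 := by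
  have hinv : A * (c⁻¹ • B) = 1 := by
    rw [Matrix.mul_smul, h, smul_smul, inv_mul_cancel₀ hc, one_smul]
  have hinv' := (mul_eq_one_comm_of_card_eq _ _ _ hcard).mp hinv
  rw [Matrix.smul_mul] at hinv'
  rw [← hinv', smul_smul, mul_inv_cancel₀ hc, one_smul]

theorem sum_norm_mulVec_sq_of_conjTranspose_mul_self_eq {𝕜 : Type*} [RCLike 𝕜]
    (A : Matrix m n 𝕜) {c : ℝ} (h : Aᴴ * A = (c : 𝕜) • 1) (w : n → 𝕜) :
    ∑ i, ‖(A *ᵥ w) i‖ ^ 2 = c * ∑ j, ‖w j‖ ^ 2 := by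
  have key : star (A *ᵥ w) ⬝ᵥ (A *ᵥ w) = (c : 𝕜) * (star w ⬝ᵥ w) := by
    rw [star_mulVec, dotProduct_mulVec, vecMul_vecMul, h, vecMul_smul, vecMul_one,
      smul_dotProduct, smul_eq_mul]
  simp only [dotProduct, Pi.star_apply, RCLike.star_def, RCLike.conj_mul] at key
  exact_mod_cast key

end Matrix

section CharMatrix

variable {R 𝕜 ι : Type*} [CommRing R] [Finite R] [RCLike 𝕜] [Fintype ι]

def charMatrix (ψ : AddChar R 𝕜) (Q S : Finset (ι → R)) : Matrix Q S 𝕜 :=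
  Matrix.of fun q s => ψ ((q : ι → R) ⬝ᵥ s)

theorem AddChar.map_sub_dotProduct (ψ : AddChar R 𝕜) (u v s : ι → R) :
    ψ ((u - v) ⬝ᵥ s) = ψ (u ⬝ᵥ s) * starRingEnd 𝕜 (ψ (v ⬝ᵥ s)) := by
  rw [sub_dotProduct, sub_eq_add_neg, AddChar.map_add_eq_mul, AddChar.map_neg_eq_conj]

theorem charMatrix_mul_conjTranspose [DecidableEq R] (ψ : AddChar R 𝕜) {Q S : Finset (ι → R)}
    (hspec : ∀ q ∈ Q, ∀ q' ∈ Q, q ≠ q' → ∑ s ∈ S, ψ ((q - q') ⬝ᵥ s) = 0) :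
    charMatrix ψ Q S * (charMatrix ψ Q S)ᴴ = (#S : 𝕜) • 1 := by
  ext q q'
  simp only [mul_apply, conjTranspose_apply, charMatrix, of_apply, RCLike.star_def,
    ← AddChar.map_sub_dotProduct, Finset.sum_coe_sort S (fun s => ψ ((q - q' : ι → R) ⬝ᵥ s)),
    Matrix.smul_apply, one_apply, smul_eq_mul]
  split_ifs with h
  · simp [h]
  · rw [mul_zero, hspec q q.2 q' q'.2 (Subtype.coe_injective.ne h)]

theorem conjTranspose_charMatrix_mul [DecidableEq R] (ψ : AddChar R 𝕜) {Q S : Finset (ι → R)}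
    (hcard : #Q = #S) (hspec : ∀ q ∈ Q, ∀ q' ∈ Q, q ≠ q' → ∑ s ∈ S, ψ ((q - q') ⬝ᵥ s) = 0) :
    (charMatrix ψ Q S)ᴴ * charMatrix ψ Q S = (#S : 𝕜) • 1 := by
  rcases S.eq_empty_or_nonempty with rfl | hS
  · ext s; exact isEmptyElim s
  exact mul_eq_smul_one_comm_of_card_eq (by simpa using hS.ne_empty) (by simpa using hcard)
    (charMatrix_mul_conjTranspose ψ hspec)

theorem norm_sum_char_sub_dotProduct (ψ : AddChar R 𝕜) (Q S : Finset (ι → R)) (x : ι → R)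
    (q : Q) :
    ‖∑ s ∈ S, ψ ((x - (q : ι → R)) ⬝ᵥ s)‖
      = ‖(charMatrix ψ Q S *ᵥ fun s => ψ (-(x ⬝ᵥ s))) q‖ := by
  rw [← RCLike.norm_conj, map_sum, mulVec, dotProduct, ← Finset.sum_coe_sort S]
  congr 2 with s
  rw [← AddChar.map_neg_eq_conj, ← neg_dotProduct, neg_sub, sub_eq_add_neg, add_dotProduct,
    AddChar.map_add_eq_mul, neg_dotProduct]
  rfl

theorem sum_norm_sum_char_sub_dotProduct_sq [DecidableEq R] (ψ : AddChar R 𝕜)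
    {Q S : Finset (ι → R)} (hcard : #Q = #S)
    (hspec : ∀ q ∈ Q, ∀ q' ∈ Q, q ≠ q' → ∑ s ∈ S, ψ ((q - q') ⬝ᵥ s) = 0) (x : ι → R) :
    ∑ q ∈ Q, ‖∑ s ∈ S, ψ ((x - q) ⬝ᵥ s)‖ ^ 2 = (#S : ℝ) ^ 2 := by
  have hA := conjTranspose_charMatrix_mul ψ hcard hspec
  rw [← Finset.sum_coe_sort Q]
  simp only [norm_sum_char_sub_dotProduct ψ Q S x]
  rw [sum_norm_mulVec_sq_of_conjTranspose_mul_self_eq _ (c := #S) (by simpa using hA)]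
  simp [AddChar.norm_apply, sq]

end CharMatrix

theorem exp_sum_val_mul_val_eq_stdAddChar {n : ℕ} [NeZero n] {ι : Type*} [Fintype ι]
    (v s : ι → ZMod n) :
    exp (2 * Real.pi * I * (∑ j, ((v j).val : ℂ) * (s j).val) / n)
      = ZMod.stdAddChar (v ⬝ᵥ s) := by
  have hcast : v ⬝ᵥ s = (((∑ j, (v j).val * (s j).val : ℕ) : ℤ) : ZMod n) := by
    push_cast [ZMod.natCast_zmod_val]; rfl
  rw [hcast, ZMod.stdAddChar_coe]
  push_cast
  ring_nf

theorem stmt_16_general (n d r : ℕ) (hn : 1 ≤ n)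
    (S Q : Finset (Fin d → ZMod n)) (hS : S.card = r) (hQ : Q.card = r)
    (hspec : ∀ q ∈ Q, ∀ q' ∈ Q, q ≠ q' →
      ∑ s ∈ S, Complex.exp (2 * (Real.pi : ℂ) * Complex.I *
        (∑ j : Fin d, (((q j - q' j).val : ℂ) * ((s j).val : ℂ))) / (n : ℂ)) = 0) :
    ∀ x : Fin d → ZMod n,
      ∑ q ∈ Q, (‖∑ s ∈ S, Complex.exp (2 * (Real.pi : ℂ) * Complex.I *
        (∑ j : Fin d, (((x j - q j).val : ℂ) * ((s j).val : ℂ))) / (n : ℂ))‖) ^ 2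
        = (r : ℝ) ^ 2 := by
  have : NeZero n := ⟨by omega⟩
  intro x
  simp only [← Pi.sub_apply, exp_sum_val_mul_val_eq_stdAddChar] at hspec ⊢
  subst hS
  exact sum_norm_sum_char_sub_dotProduct_sq ZMod.stdAddChar hQ hspec x

/-- If `(S, Q)` is a spectral pair in `(ℤ/nℤ)^d` with `|S| = |Q| = r`, then
`|χ̂_S|²` tiles `(ℤ/nℤ)^d` at level `r²` when translated along `Q`. -/
theorem stmt_16 (n d r : ℕ) (hn : 1 ≤ n) (hd : 1 ≤ d)
    (S Q : Finset (Fin d → ZMod n)) (hS : S.card = r) (hQ : Q.card = r)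
    (hspec : ∀ q ∈ Q, ∀ q' ∈ Q, q ≠ q' →
      ∑ s ∈ S, Complex.exp (2 * (Real.pi : ℂ) * Complex.I *
        (∑ j : Fin d, (((q j - q' j).val : ℂ) * ((s j).val : ℂ))) / (n : ℂ)) = 0) :
    ∀ x : Fin d → ZMod n,
      ∑ q ∈ Q, (‖∑ s ∈ S, Complex.exp (2 * (Real.pi : ℂ) * Complex.I *
        (∑ j : Fin d, (((x j - q j).val : ℂ) * ((s j).val : ℂ))) / (n : ℂ))‖) ^ 2
        = (r : ℝ) ^ 2 :=
  stmt_16_general n d r hn S Q hS hQ hspec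
end

section
/- The notched cube tiles ℝ³ by translations: for any real numbers ε₁, ε₂, ε₃ with 0 < ε_j < 1, let N = [0,1]³ \ ((1−ε₁, 1] × (1−ε₂, 1] × (1−ε₃, 1]) be the unit cube with a rectangular box removed from one corner. Then there exists a countable set Λ ⊆ ℝ³ such that ∑_{λ ∈ Λ} χ_N(x − λ) = 1 for almost every x ∈ ℝ³ (with respect to Lebesgue measure). -/
open MeasureTheory Set

namespace Notch19

noncomputable def lam (ε : Fin 3 → ℝ) (n : Fin 3 → ℤ) : Fin 3 → ℝ :=
  fun j => (n j : ℝ) - ε j * (n (j - 1) : ℝ)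

def NSet (ε : Fin 3 → ℝ) : Set (Fin 3 → ℝ) :=
  Set.Icc (0 : Fin 3 → ℝ) 1 \ Set.univ.pi (fun j => Set.Ioc (1 - ε j) 1)

lemma floor_succ_iff {t e : ℝ} (he1 : e < 1)
    (ht : ∀ m : ℤ, t + e ≠ (m : ℝ)) :
    ⌊t + e⌋ = ⌊t⌋ + 1 ↔ 1 - e < t - ⌊t⌋ := by
  constructor
  · intro h
    have h1 : ((⌊t⌋ : ℝ) + 1) ≤ t + e := by
      have := Int.floor_le (t + e)
      rw [h] at this; push_cast at this; linarith
    have h2 : t + e ≠ (⌊t⌋ : ℝ) + 1 := by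
      have := ht (⌊t⌋ + 1); push_cast at this; exact this
    have : (⌊t⌋ : ℝ) + 1 < t + e := lt_of_le_of_ne h1 (Ne.symm h2)
    linarith
  · intro h
    have hle : ⌊t + e⌋ ≤ ⌊t⌋ + 1 := by
      have : ⌊t + e⌋ ≤ ⌊t + (1 : ℤ)⌋ := Int.floor_le_floor (by push_cast; linarith)
      rwa [Int.floor_add_intCast] at this
    have hge : ⌊t⌋ + 1 ≤ ⌊t + e⌋ := by
      apply Int.le_floor.mpr; push_cast; linarith
    omega

lemma exists_unique_tile (ε : Fin 3 → ℝ) (hε : ∀ j, 0 < ε j ∧ ε j < 1)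
    (x : Fin 3 → ℝ) (hx : ∀ (j : Fin 3) (k m : ℤ), x j + ε j * k ≠ (m : ℝ)) :
    ∃! n : Fin 3 → ℤ, x - lam ε n ∈ NSet ε := by
  -- the floor maps
  set t : Fin 3 → ℤ → ℝ := fun j k => x j + ε j * k with htdef
  set f : Fin 3 → ℤ → ℤ := fun j k => ⌊t j k⌋ with hfdef
  have hfle : ∀ j k, (f j k : ℝ) ≤ t j k := fun j k => Int.floor_le _
  have hflt : ∀ j k, t j k < f j k + 1 := fun j k => Int.lt_floor_add_one _
  have hfmono : ∀ j, Monotone (f j) := by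
    intro j a b hab
    apply Int.floor_le_floor
    have : (a : ℝ) ≤ b := by exact_mod_cast hab
    have := (hε j).1
    simp only [htdef]
    nlinarith
  have htsucc : ∀ j k, t j (k + 1) = t j k + ε j := by
    intro j k; simp only [htdef]; push_cast; ring
  have hfstep : ∀ j k, f j (k + 1) ≤ f j k + 1 := by
    intro j k
    have : ⌊t j (k+1)⌋ ≤ ⌊t j k + (1:ℤ)⌋ := by
      apply Int.floor_le_floor; rw [htsucc]; push_cast; linarith [(hε j).2]
    rw [Int.floor_add_intCast] at this
    exact this
  have hbump : ∀ j k, f j (k + 1) = f j k + 1 ↔ 1 - ε j < t j k - f j k := by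
    intro j k
    have := floor_succ_iff (t := t j k) (e := ε j) (hε j).2
      (fun m => by rw [← htsucc]; exact hx j (k+1) m)
    rw [← htsucc] at this
    exact this
  set F : ℤ → ℤ := fun m => f 2 (f 1 (f 0 m)) with hFdef
  have hFmono : Monotone F := fun a b hab => hfmono 2 (hfmono 1 (hfmono 0 hab))
  have hFstep : ∀ m, F (m + 1) ≤ F m + 1 := by
    intro m
    calc f 2 (f 1 (f 0 (m+1))) ≤ f 2 (f 1 (f 0 m + 1)) := hfmono 2 (hfmono 1 (hfstep 0 m))
      _ ≤ f 2 (f 1 (f 0 m) + 1) := hfmono 2 (hfstep 1 _)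
      _ ≤ f 2 (f 1 (f 0 m)) + 1 := hfstep 2 _
  have hganti : Antitone (fun m => F m - m) := by
    apply antitone_int_of_succ_le
    intro m
    have := hFstep m
    omega
  -- bounds for F
  have hE1 : ε 2 * ε 1 * ε 0 < 1 := by
    have h0 := hε 0; have h1 := hε 1; have h2 := hε 2
    have s1 : ε 2 * ε 1 < 1 := by nlinarith [h2.1, h2.2, h1.1, h1.2]
    nlinarith [h0.1, h0.2, s1, mul_pos h2.1 h1.1]
  have hfle' : ∀ (j : Fin 3) (k : ℤ), (f j k : ℝ) ≤ x j + ε j * k := hfle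
  have hflt' : ∀ (j : Fin 3) (k : ℤ), x j + ε j * k < f j k + 1 := hflt
  have hub : ∀ m : ℤ, (F m : ℝ) ≤ (x 2 + ε 2 * x 1 + ε 2 * ε 1 * x 0) + (ε 2 * ε 1 * ε 0) * m := by
    intro m
    have e0 := (hε 0).1; have e1 := (hε 1).1; have e2 := (hε 2).1
    have h0 : (f 0 m : ℝ) ≤ x 0 + ε 0 * m := hfle' 0 m
    have h1 : (f 1 (f 0 m) : ℝ) ≤ x 1 + ε 1 * (f 0 m) := hfle' 1 _
    have h2 : (F m : ℝ) ≤ x 2 + ε 2 * (f 1 (f 0 m)) := hfle' 2 _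
    have s1 : ε 2 * (f 1 (f 0 m) : ℝ) ≤ ε 2 * (x 1 + ε 1 * (f 0 m)) :=
      mul_le_mul_of_nonneg_left h1 e2.le
    have s2 : (ε 2 * ε 1) * (f 0 m : ℝ) ≤ (ε 2 * ε 1) * (x 0 + ε 0 * m) :=
      mul_le_mul_of_nonneg_left h0 (by positivity)
    nlinarith [s1, s2]
  have hlb : ∀ m : ℤ, (x 2 + ε 2 * x 1 + ε 2 * ε 1 * x 0) + (ε 2 * ε 1 * ε 0) * m - 3 ≤ (F m : ℝ) := by
    intro m
    have e0 := (hε 0).1; have e1 := (hε 1).1; have e2 := (hε 2).1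
    have e1' := (hε 1).2; have e2' := (hε 2).2
    have h0 : x 0 + ε 0 * m - 1 ≤ (f 0 m : ℝ) := by linarith [hflt' 0 m]
    have h1 : x 1 + ε 1 * (f 0 m) - 1 ≤ (f 1 (f 0 m) : ℝ) := by linarith [hflt' 1 (f 0 m)]
    have h2 : x 2 + ε 2 * (f 1 (f 0 m)) - 1 ≤ (F m : ℝ) := by linarith [hflt' 2 (f 1 (f 0 m))]
    have s1 : ε 2 * (x 1 + ε 1 * (f 0 m) - 1) ≤ ε 2 * (f 1 (f 0 m) : ℝ) :=
      mul_le_mul_of_nonneg_left h1 e2.le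
    have s2 : (ε 2 * ε 1) * (x 0 + ε 0 * m - 1) ≤ (ε 2 * ε 1) * (f 0 m : ℝ) :=
      mul_le_mul_of_nonneg_left h0 (by positivity)
    nlinarith [s1, s2]
  -- a greatest fixed point of F
  obtain ⟨m₁, hm₁fix, hm₁max⟩ : ∃ m₁, m₁ ≤ F m₁ ∧ ∀ z, z ≤ F z → z ≤ m₁ := by
    set C := x 2 + ε 2 * x 1 + ε 2 * ε 1 * x 0 with hC
    set E := ε 2 * ε 1 * ε 0 with hEdef
    have hEpos : 0 < E := by
      have e0 := (hε 0).1; have e1 := (hε 1).1; have e2 := (hε 2).1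
      positivity
    obtain ⟨M, hM⟩ := exists_int_gt (C / (1 - E))
    obtain ⟨mlo, hmlo⟩ := exists_int_lt ((C - 3) / (1 - E))
    have hMlt : F M < M := by
      have h1 : C + E * M < M := by
        have : C < (1 - E) * M := by
          rw [div_lt_iff₀ (by linarith)] at hM; linarith
        nlinarith
      have := hub M
      have : (F M : ℝ) < M := by linarith
      exact_mod_cast this
    have hlo : mlo ≤ F mlo := by
      have h1 : (mlo : ℝ) < C + E * mlo - 3 := by
        have : (1 - E) * mlo < C - 3 := by
          rw [lt_div_iff₀ (by linarith)] at hmlo; linarith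
        nlinarith
      have := hlb mlo
      have : (mlo : ℝ) ≤ (F mlo : ℝ) := by linarith
      exact_mod_cast this
    have hbdd : ∀ z : ℤ, z ≤ F z → z ≤ M := by
      intro z hz
      by_contra h
      push_neg at h
      have := hganti (le_of_lt h)
      simp only at this
      omega
    exact Int.exists_greatest_of_bdd ⟨M, hbdd⟩ ⟨mlo, hlo⟩
  have hm₁ : F m₁ = m₁ := by
    have h2 : F (m₁ + 1) < m₁ + 1 := by
      by_contra h
      push_neg at h
      have := hm₁max (m₁ + 1) h
      omega
    have := hFmono (by omega : m₁ ≤ m₁ + 1)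
    omega

  have hteq : ∀ (j : Fin 3) (k : ℤ), t j k = x j + ε j * k := fun _ _ => rfl
  -- coordinates of the difference
  have hxy : ∀ (n : Fin 3 → ℤ) (j : Fin 3),
      (x - lam ε n) j = x j + ε j * (n (j - 1)) - n j := by
    intro n j
    simp only [Pi.sub_apply, lam]
    ring
  -- characterization of membership in the cube
  have hIcc : ∀ n : Fin 3 → ℤ, x - lam ε n ∈ Set.Icc (0 : Fin 3 → ℝ) 1 ↔
      (n 0 = f 0 (n 2) ∧ n 1 = f 1 (n 0) ∧ n 2 = f 2 (n 1)) := by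
    intro n
    rw [Set.mem_Icc]
    constructor
    · rintro ⟨hl, hu⟩
      have key : ∀ j : Fin 3, n j = f j (n (j - 1)) := by
        intro j
        have hb0 : (0 : ℝ) ≤ x j + ε j * (n (j - 1)) - n j := by
          have := Pi.le_def.mp hl j
          simpa [hxy n j] using this
        have hb1 : x j + ε j * (n (j - 1)) - n j ≤ 1 := by
          have := Pi.le_def.mp hu j
          simpa [hxy n j] using this
        have hne : x j + ε j * (n (j - 1)) ≠ (n j : ℝ) + 1 := by
          have := hx j (n (j - 1)) (n j + 1); push_cast at this; exact this
        symm
        rw [Int.floor_eq_iff, hteq]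
        constructor
        · linarith
        · have hlt1 : x j + ε j * (n (j - 1)) - n j < 1 :=
            lt_of_le_of_ne hb1 (fun h => hne (by linarith))
          push_cast
          linarith
      exact ⟨key 0, key 1, key 2⟩
    · rintro ⟨h0, h1, h2⟩
      have key : ∀ j : Fin 3, n j = f j (n (j - 1)) := by
        intro j
        fin_cases j
        · exact h0
        · exact h1
        · exact h2
      constructor <;> (rw [Pi.le_def]; intro j) <;>
        [ (have hk := key j
           have hu1 := hfle' j (n (j - 1))
           have hu2 := hflt' j (n (j - 1))
           simp only [Pi.zero_apply, hxy n j]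
           rw [hk]
           linarith);
          (have hk := key j
           have hu1 := hfle' j (n (j - 1))
           have hu2 := hflt' j (n (j - 1))
           simp only [Pi.one_apply, hxy n j]
           rw [hk]
           linarith) ]
  -- full membership characterization
  have hmem : ∀ n : Fin 3 → ℤ, (x - lam ε n ∈ NSet ε ↔
      ((n 0 = f 0 (n 2) ∧ n 1 = f 1 (n 0) ∧ n 2 = f 2 (n 1)) ∧
        ¬ (1 - ε 0 < x 0 + ε 0 * (n 2) - n 0 ∧ 1 - ε 1 < x 1 + ε 1 * (n 0) - n 1 ∧
           1 - ε 2 < x 2 + ε 2 * (n 1) - n 2))) := by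
    intro n
    constructor
    · rintro ⟨hicc, hpi⟩
      refine ⟨(hIcc n).mp hicc, fun hnn => hpi ?_⟩
      rw [Set.mem_univ_pi]
      intro j
      rw [Set.mem_Ioc, hxy n j]
      constructor
      · fin_cases j
        · exact hnn.1
        · exact hnn.2.1
        · exact hnn.2.2
      · have := Pi.le_def.mp hicc.2 j
        simpa [hxy n j] using this
    · rintro ⟨hc, hnn⟩
      refine ⟨(hIcc n).mpr hc, fun hpi => hnn ?_⟩
      have g0 := Set.mem_univ_pi.mp hpi 0
      have g1 := Set.mem_univ_pi.mp hpi 1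
      have g2 := Set.mem_univ_pi.mp hpi 2
      rw [Set.mem_Ioc, hxy n 0] at g0
      rw [Set.mem_Ioc, hxy n 1] at g1
      rw [Set.mem_Ioc, hxy n 2] at g2
      exact ⟨g0.1, g1.1, g2.1⟩
  -- the notch condition means the next integer is also a fixed point
  have hkey : ∀ n : Fin 3 → ℤ, n 0 = f 0 (n 2) → n 1 = f 1 (n 0) → n 2 = f 2 (n 1) →
      ((1 - ε 0 < x 0 + ε 0 * (n 2) - n 0 ∧ 1 - ε 1 < x 1 + ε 1 * (n 0) - n 1 ∧
        1 - ε 2 < x 2 + ε 2 * (n 1) - n 2) ↔ F (n 2 + 1) = n 2 + 1) := by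
    intro n h0 h1 h2
    constructor
    · rintro ⟨g0, g1, g2⟩
      rw [h0] at g0; rw [h1] at g1; rw [h2] at g2
      have b0 : f 0 (n 2 + 1) = f 0 (n 2) + 1 := (hbump 0 (n 2)).mpr (by rw [hteq]; exact g0)
      have b1 : f 1 (n 0 + 1) = f 1 (n 0) + 1 := (hbump 1 (n 0)).mpr (by rw [hteq]; exact g1)
      have b2 : f 2 (n 1 + 1) = f 2 (n 1) + 1 := (hbump 2 (n 1)).mpr (by rw [hteq]; exact g2)
      show f 2 (f 1 (f 0 (n 2 + 1))) = n 2 + 1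
      rw [b0, ← h0, b1, ← h1, b2, ← h2]
    · intro hF
      have r0 := hfmono 0 (show n 2 ≤ n 2 + 1 by omega)
      have r0' := hfstep 0 (n 2)
      have hc0 : f 0 (n 2 + 1) = f 0 (n 2) ∨ f 0 (n 2 + 1) = f 0 (n 2) + 1 := by omega
      rcases hc0 with hc0 | hc0
      · exfalso
        have : F (n 2 + 1) = n 2 := by
          show f 2 (f 1 (f 0 (n 2 + 1))) = n 2
          rw [hc0, ← h0, ← h1, ← h2]
        omega
      · have g0 := (hbump 0 (n 2)).mp hc0
        rw [hteq, ← h0] at g0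
        rw [← h0] at hc0
        have r1 := hfmono 1 (show n 0 ≤ n 0 + 1 by omega)
        have r1' := hfstep 1 (n 0)
        have hc1 : f 1 (n 0 + 1) = f 1 (n 0) ∨ f 1 (n 0 + 1) = f 1 (n 0) + 1 := by omega
        rcases hc1 with hc1 | hc1
        · exfalso
          have : F (n 2 + 1) = n 2 := by
            show f 2 (f 1 (f 0 (n 2 + 1))) = n 2
            rw [hc0, hc1, ← h1, ← h2]
          omega
        · have g1 := (hbump 1 (n 0)).mp hc1
          rw [hteq, ← h1] at g1
          rw [← h1] at hc1
          have hc2 : f 2 (n 1 + 1) = f 2 (n 1) + 1 := by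
            have hFv : F (n 2 + 1) = f 2 (n 1 + 1) := by
              show f 2 (f 1 (f 0 (n 2 + 1))) = f 2 (n 1 + 1)
              rw [hc0, hc1]
            rw [← h2]
            omega
          have g2 := (hbump 2 (n 1)).mp hc2
          rw [hteq, ← h2] at g2
          exact ⟨g0, g1, g2⟩
  -- the solution
  set nsol : Fin 3 → ℤ := ![f 0 m₁, f 1 (f 0 m₁), m₁] with hnsoldef
  have hs2v : nsol 2 = m₁ := rfl
  have hs0 : nsol 0 = f 0 (nsol 2) := rfl
  have hs1 : nsol 1 = f 1 (nsol 0) := rfl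
  have hs2 : nsol 2 = f 2 (nsol 1) := hm₁.symm
  have hexist : x - lam ε nsol ∈ NSet ε := by
    refine (hmem nsol).mpr ⟨⟨hs0, hs1, hs2⟩, fun hnn => ?_⟩
    have hfixnext := (hkey nsol hs0 hs1 hs2).mp hnn
    rw [hs2v] at hfixnext
    have := hm₁max (m₁ + 1) (le_of_eq hfixnext.symm)
    omega
  refine ⟨nsol, hexist, ?_⟩
  intro n hn
  obtain ⟨⟨h0, h1, h2⟩, hnn⟩ := (hmem n).mp hn
  have hfix : F (n 2) = n 2 := by
    show f 2 (f 1 (f 0 (n 2))) = n 2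
    rw [← h0, ← h1, ← h2]
  have hle : n 2 ≤ m₁ := hm₁max _ (le_of_eq hfix.symm)
  have h2m : n 2 = m₁ := by
    by_contra hne
    have hlt : n 2 < m₁ := lt_of_le_of_ne hle hne
    have ha1 : F m₁ - m₁ ≤ F (n 2 + 1) - (n 2 + 1) := hganti (by omega)
    have ha2 : F (n 2 + 1) - (n 2 + 1) ≤ F (n 2) - (n 2) := hganti (by omega)
    exact hnn ((hkey n h0 h1 h2).mpr (by omega))
  funext j
  fin_cases j
  · show n 0 = nsol 0
    rw [h0, h2m]; rfl
  · show n 1 = nsol 1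
    rw [h1, h0, h2m]; rfl
  · show n 2 = nsol 2
    rw [h2m]; rfl

lemma hyperplane_null (j : Fin 3) (c : ℝ) :
    volume {x : Fin 3 → ℝ | x j = c} = 0 := by
  have h : {x : Fin 3 → ℝ | x j = c}
      = Set.pi Set.univ (fun i => if i = j then {c} else Set.univ) := by
    ext y
    simp only [Set.mem_setOf_eq, Set.mem_pi, Set.mem_univ, true_implies]
    constructor
    · intro hy i
      by_cases hij : i = j
      · subst hij; simp [hy]
      · simp [hij]
    · intro hy
      have := hy j
      simpa using this
  rw [h, volume_pi_pi]
  apply Finset.prod_eq_zero (Finset.mem_univ j)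
  simp

end Notch19

/-- The notched cube tiles `ℝ³` by translations: for any `0 < εⱼ < 1`, the unit
cube with the box `(1-ε₁,1] × (1-ε₂,1] × (1-ε₃,1]` removed from a corner admits
a countable set of translations tiling `ℝ³` at level 1 almost everywhere. -/
theorem stmt_19 (ε : Fin 3 → ℝ) (hε : ∀ j, 0 < ε j ∧ ε j < 1) :
    ∃ Λ : Set (Fin 3 → ℝ), Λ.Countable ∧
      ∀ᵐ x ∂(volume : Measure (Fin 3 → ℝ)),
        HasSum (fun l : Λ =>
          (Set.Icc (0 : Fin 3 → ℝ) 1 \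
            Set.univ.pi (fun j => Set.Ioc (1 - ε j) 1)).indicator
            (fun _ => (1 : ℝ)) (x - (l : Fin 3 → ℝ))) 1 := by
  classical
  refine ⟨Set.range (Notch19.lam ε), Set.countable_range _, ?_⟩
  have hbad : volume (⋃ p : Fin 3 × ℤ × ℤ,
      {x : Fin 3 → ℝ | x p.1 = (p.2.2 : ℝ) - ε p.1 * p.2.1}) = 0 :=
    measure_iUnion_null fun p => Notch19.hyperplane_null p.1 _
  have hae := (measure_eq_zero_iff_ae_notMem (μ := (volume : Measure (Fin 3 → ℝ)))).mp hbad
  filter_upwards [hae] with x hxg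
  have hx : ∀ (j : Fin 3) (k m : ℤ), x j + ε j * k ≠ (m : ℝ) := by
    intro j k m h
    exact hxg (Set.mem_iUnion.mpr ⟨⟨j, k, m⟩, by simp only [Set.mem_setOf_eq]; linarith⟩)
  obtain ⟨n₁, hn₁, huniq⟩ := Notch19.exists_unique_tile ε hε x hx
  set l₀ : (Set.range (Notch19.lam ε) : Set (Fin 3 → ℝ)) :=
    ⟨Notch19.lam ε n₁, Set.mem_range_self n₁⟩ with hl₀
  have hfun : (fun l : (Set.range (Notch19.lam ε) : Set (Fin 3 → ℝ)) =>
      (Set.Icc (0 : Fin 3 → ℝ) 1 \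
        Set.univ.pi (fun j => Set.Ioc (1 - ε j) 1)).indicator
        (fun _ => (1 : ℝ)) (x - (l : Fin 3 → ℝ)))
      = fun l => if l = l₀ then 1 else 0 := by
    funext l
    rcases l with ⟨lv, hlv⟩
    obtain ⟨n', rfl⟩ := hlv
    show (Notch19.NSet ε).indicator (fun _ => (1 : ℝ)) (x - Notch19.lam ε n')
        = if (⟨Notch19.lam ε n', Set.mem_range_self n'⟩ :
            (Set.range (Notch19.lam ε) : Set (Fin 3 → ℝ))) = l₀ then 1 else 0
    by_cases h : x - Notch19.lam ε n' ∈ Notch19.NSet ε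
    · have hn' : n' = n₁ := huniq n' h
      subst hn'
      rw [Set.indicator_of_mem h, if_pos (Subtype.ext rfl)]
    · rw [Set.indicator_of_notMem h, if_neg]
      intro hl
      apply h
      have hv : Notch19.lam ε n' = (l₀ : Fin 3 → ℝ) := congrArg Subtype.val hl
      rw [hv]
      exact hn₁
  rw [hfun]
  exact hasSum_ite_eq l₀ 1
end
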